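/- arXiv:1801.02327 — 3 statements merged into one kernel-verified Lean document; each statement's English description precedes it below -/
import Mathlib

section
/- Let f be a smooth function on [0,1] extended periodically (or f ∈ H¹(0,1)). Then sup_{z∈[0,1]} |f(z)| ≤ C ‖f‖_{L⁶(0,1)}^{3/4} ‖f'‖_{L²(0,1)}^{1/4} + ‖f‖_{L⁴(0,1)}, for an absolute constant C. -/
open MeasureTheory Set

noncomputable section

/-- The periodic box Ω = [0,L]² × [0,1]. -/
def Box (L : ℝ) : Set (ℝ × ℝ × ℝ) := Icc 0 L ×ˢ Icc 0 L ×ˢ Icc 0 1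

/-- The horizontal square [0,L]². -/
def Sq (L : ℝ) : Set (ℝ × ℝ) := Icc 0 L ×ˢ Icc 0 L

/-- Partial derivative in x. -/
def pdx (f : ℝ × ℝ × ℝ → ℝ) (p : ℝ × ℝ × ℝ) : ℝ := fderiv ℝ f p (1, 0, 0)
/-- Partial derivative in y. -/
def pdy (f : ℝ × ℝ × ℝ → ℝ) (p : ℝ × ℝ × ℝ) : ℝ := fderiv ℝ f p (0, 1, 0)
/-- Partial derivative in z. -/
def pdz (f : ℝ × ℝ × ℝ → ℝ) (p : ℝ × ℝ × ℝ) : ℝ := fderiv ℝ f p (0, 0, 1)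

/-- Periodicity: period L in x and y, period 1 in z. -/
def Per (L : ℝ) (f : ℝ × ℝ × ℝ → ℝ) : Prop :=
  (∀ x y z : ℝ, f (x + L, y, z) = f (x, y, z)) ∧
  (∀ x y z : ℝ, f (x, y + L, z) = f (x, y, z)) ∧
  (∀ x y z : ℝ, f (x, y, z + 1) = f (x, y, z))

/-- The L²(Ω) norm. -/
def nL2 (L : ℝ) (f : ℝ × ℝ × ℝ → ℝ) : ℝ := (∫ p in Box L, (f p) ^ 2) ^ ((1 : ℝ) / 2)

/-- The L² norm of the horizontal gradient ∇_h f. -/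
def nGH (L : ℝ) (f : ℝ × ℝ × ℝ → ℝ) : ℝ :=
  (∫ p in Box L, (pdx f p) ^ 2 + (pdy f p) ^ 2) ^ ((1 : ℝ) / 2)

lemma rpow_add_le_add_rpow' {a b p : ℝ} (ha : 0 ≤ a) (hb : 0 ≤ b) (hp : 0 ≤ p) (hp1 : p ≤ 1) :
    (a + b) ^ p ≤ a ^ p + b ^ p := by
  have h := NNReal.rpow_add_le_add_rpow a.toNNReal b.toNNReal hp hp1
  have h2 := NNReal.coe_le_coe.2 h
  push_cast [Real.coe_toNNReal a ha, Real.coe_toNNReal b hb] at h2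
  exact h2


/-- 1D interpolation: sup_{[0,1]} |f| ≤ C‖f‖_{L⁶}^{3/4}‖f'‖_{L²}^{1/4} + ‖f‖_{L⁴},
with an absolute constant C. -/
theorem stmt5 :
    ∃ C : ℝ, 0 < C ∧ ∀ f : ℝ → ℝ, ContDiff ℝ (⊤ : ℕ∞) f → Function.Periodic f 1 →
      ∀ z ∈ Icc (0:ℝ) 1,
        |f z| ≤ C * ((∫ t in (0:ℝ)..1, |f t| ^ 6) ^ ((1:ℝ)/6)) ^ ((3:ℝ)/4)
                  * ((∫ t in (0:ℝ)..1, (deriv f t) ^ 2) ^ ((1:ℝ)/2)) ^ ((1:ℝ)/4)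
              + (∫ t in (0:ℝ)..1, |f t| ^ 4) ^ ((1:ℝ)/4) := by
  refine ⟨2, two_pos, ?_⟩
  intro f hf _ z hz
  have hfc : Continuous f := hf.continuous
  have hfd : Continuous (deriv f) := hf.continuous_deriv (by simp)
  set I6 := ∫ t in (0:ℝ)..1, |f t| ^ 6 with hI6def
  set I2 := ∫ t in (0:ℝ)..1, (deriv f t) ^ 2 with hI2def
  set I4 := ∫ t in (0:ℝ)..1, |f t| ^ 4 with hI4def
  have hI6nn : 0 ≤ I6 :=
    intervalIntegral.integral_nonneg zero_le_one (fun t _ => by positivity)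
  have hI2nn : 0 ≤ I2 :=
    intervalIntegral.integral_nonneg zero_le_one (fun t _ => by positivity)
  have hI4nn : 0 ≤ I4 :=
    intervalIntegral.integral_nonneg zero_le_one (fun t _ => by positivity)
  set h : ℝ → ℝ := fun s => 4 * f s ^ 3 * deriv f s with hhdef
  have hhc : Continuous h := (continuous_const.mul (hfc.pow 3)).mul hfd
  -- FTC
  have hderiv : ∀ s : ℝ, HasDerivAt (fun u => f u ^ 4) (h s) s := by
    intro s
    have hd := ((hf.differentiable (by simp) s).hasDerivAt).fun_pow 4
    simpa [hhdef, mul_comm, mul_assoc, mul_left_comm] using hd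
  have ftc : ∀ t : ℝ, ∫ s in t..z, h s = f z ^ 4 - f t ^ 4 := fun t =>
    intervalIntegral.integral_eq_sub_of_hasDerivAt (fun s _ => hderiv s)
      (hhc.intervalIntegrable _ _)
  set K := ∫ s in (0:ℝ)..1, |h s| with hKdef
  -- pointwise bound
  have hptwise : ∀ t ∈ Icc (0:ℝ) 1, f z ^ 4 ≤ |f t| ^ 4 + K := by
    intro t ht
    have h2 : |∫ s in t..z, h s| ≤ K := by
      calc |∫ s in t..z, h s| ≤ ∫ s in Set.uIoc t z, |h s| := by
            simpa [Real.norm_eq_abs] using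
              intervalIntegral.norm_integral_le_integral_norm_uIoc (f := h) (a := t) (b := z) (μ := volume)
        _ ≤ ∫ s in Ioc (0:ℝ) 1, |h s| := by
            have hint : IntegrableOn (fun s => |h s|) (Ioc (0:ℝ) 1) volume :=
              Continuous.integrableOn_Ioc (μ := volume) hhc.abs
            apply setIntegral_mono_set hint
            · filter_upwards with s using abs_nonneg _
            · apply HasSubset.Subset.eventuallyLE
              rw [uIoc]
              exact Ioc_subset_Ioc (le_min ht.1 hz.1) (max_le ht.2 hz.2)
        _ = K := (intervalIntegral.integral_of_le zero_le_one).symm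
    have h3 : f t ^ 4 = |f t| ^ 4 := by
      rw [← abs_pow]; exact (abs_of_nonneg (by positivity)).symm
    have h4 := (le_abs_self (∫ s in t..z, h s)).trans h2
    have h5 := ftc t
    rw [← h3]; linarith
  -- integrate the pointwise bound over t
  have key : f z ^ 4 ≤ I4 + K := by
    have hmono := intervalIntegral.integral_mono_on (μ := volume) (f := fun _ => f z ^ 4)
      (g := fun t => |f t| ^ 4 + K) zero_le_one (intervalIntegrable_const)
      (((hfc.abs.pow 4).add continuous_const).intervalIntegrable _ _) hptwise
    have hL : ∫ _ in (0:ℝ)..1, f z ^ 4 = f z ^ 4 := by simp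
    have hR : ∫ t in (0:ℝ)..1, (|f t| ^ 4 + K) = I4 + K := by
      rw [intervalIntegral.integral_add (f := fun t => |f t| ^ 4) (g := fun _ => K) ((hfc.abs.pow 4).intervalIntegrable _ _)
        (intervalIntegrable_const)]
      simp
      rfl
    rw [hL, hR] at hmono
    exact hmono
  -- Cauchy–Schwarz for K
  have hKcs : K ≤ 4 * (I6 ^ ((1:ℝ)/2) * I2 ^ ((1:ℝ)/2)) := by
    set μr := volume.restrict (Ioc (0:ℝ) 1) with hμr
    haveI : IsFiniteMeasure μr := ⟨by
      rw [hμr, Measure.restrict_apply_univ]; exact measure_Ioc_lt_top⟩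
    -- bounds
    obtain ⟨M1, hM1⟩ := (isCompact_Icc (a := (0:ℝ)) (b := 1)).exists_bound_of_continuousOn
      ((hfc.abs.pow 3).continuousOn)
    obtain ⟨M2, hM2⟩ := (isCompact_Icc (a := (0:ℝ)) (b := 1)).exists_bound_of_continuousOn
      (hfd.abs.continuousOn)
    have hmemA : MemLp (fun s => |f s| ^ 3) (ENNReal.ofReal 2) μr := by
      refine MemLp.of_bound ((hfc.abs.pow 3).aestronglyMeasurable) M1 ?_
      rw [hμr, ae_restrict_iff' measurableSet_Ioc]
      filter_upwards with s hs using hM1 s (Ioc_subset_Icc_self hs)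
    have hmemB : MemLp (fun s => |deriv f s|) (ENNReal.ofReal 2) μr := by
      refine MemLp.of_bound (hfd.abs.aestronglyMeasurable) M2 ?_
      rw [hμr, ae_restrict_iff' measurableSet_Ioc]
      filter_upwards with s hs using hM2 s (Ioc_subset_Icc_self hs)
    have hhold := MeasureTheory.integral_mul_le_Lp_mul_Lq_of_nonneg
      (Real.holderConjugate_iff.mpr ⟨by norm_num, by norm_num⟩ : Real.HolderConjugate 2 2)
      (Filter.Eventually.of_forall (fun s => by positivity))
      (Filter.Eventually.of_forall (fun s => abs_nonneg _)) hmemA hmemB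
    have e1 : ∫ s, (|f s| ^ 3) ^ (2:ℝ) ∂μr = I6 := by
      rw [hI6def, intervalIntegral.integral_of_le zero_le_one, hμr]
      apply integral_congr_ae
      filter_upwards with s
      rw [Real.rpow_two]; ring
    have e2 : ∫ s, (|deriv f s|) ^ (2:ℝ) ∂μr = I2 := by
      rw [hI2def, intervalIntegral.integral_of_le zero_le_one, hμr]
      apply integral_congr_ae
      filter_upwards with s
      rw [Real.rpow_two, sq_abs]
    rw [e1, e2] at hhold
    have eK : K = 4 * ∫ s, |f s| ^ 3 * |deriv f s| ∂μr := by
      rw [hKdef, intervalIntegral.integral_of_le zero_le_one, hμr, ← integral_const_mul]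
      apply integral_congr_ae
      filter_upwards with s
      rw [hhdef]
      simp only [abs_mul, abs_pow]
      rw [show |(4:ℝ)| = 4 by norm_num]
      ring
    rw [eK]
    exact mul_le_mul_of_nonneg_left (by simpa [one_div] using hhold) (by norm_num)
  -- combine
  have key2 : f z ^ 4 ≤ I4 + 4 * (I6 ^ ((1:ℝ)/2) * I2 ^ ((1:ℝ)/2)) := by linarith
  have habs : |f z| = (f z ^ 4) ^ ((1:ℝ)/4) := by
    have h3 : f z ^ 4 = |f z| ^ 4 := by
      rw [← abs_pow]; exact (abs_of_nonneg (by positivity)).symm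
    rw [h3, ← Real.rpow_natCast |f z| 4, ← Real.rpow_mul (abs_nonneg _)]
    norm_num
  have hstep1 : |f z| ≤ (I4 + 4 * (I6 ^ ((1:ℝ)/2) * I2 ^ ((1:ℝ)/2))) ^ ((1:ℝ)/4) := by
    rw [habs]
    exact Real.rpow_le_rpow (by positivity) key2 (by norm_num)
  have hprodnn : (0:ℝ) ≤ 4 * (I6 ^ ((1:ℝ)/2) * I2 ^ ((1:ℝ)/2)) := by positivity
  have hstep2 : (I4 + 4 * (I6 ^ ((1:ℝ)/2) * I2 ^ ((1:ℝ)/2))) ^ ((1:ℝ)/4)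
      ≤ I4 ^ ((1:ℝ)/4) + (4 * (I6 ^ ((1:ℝ)/2) * I2 ^ ((1:ℝ)/2))) ^ ((1:ℝ)/4) :=
    rpow_add_le_add_rpow' hI4nn hprodnn (by norm_num) (by norm_num)
  have hstep3 : (4 * (I6 ^ ((1:ℝ)/2) * I2 ^ ((1:ℝ)/2))) ^ ((1:ℝ)/4)
      ≤ 2 * (I6 ^ ((1:ℝ)/8) * I2 ^ ((1:ℝ)/8)) := by
    have h414 : (4:ℝ) ^ ((1:ℝ)/4) ≤ 2 := by
      have h16 : ((16:ℝ)) ^ ((1:ℝ)/4) = 2 := by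
        rw [show (16:ℝ) = 2 ^ (4:ℕ) by norm_num, ← Real.rpow_natCast 2 4,
          ← Real.rpow_mul (by norm_num : (0:ℝ) ≤ 2)]
        norm_num
      calc (4:ℝ) ^ ((1:ℝ)/4) ≤ (16:ℝ) ^ ((1:ℝ)/4) :=
            Real.rpow_le_rpow (by norm_num) (by norm_num) (by norm_num)
        _ = 2 := h16
    rw [Real.mul_rpow (by norm_num) (by positivity),
      Real.mul_rpow (by positivity) (by positivity),
      ← Real.rpow_mul hI6nn, ← Real.rpow_mul hI2nn]
    rw [show (1:ℝ)/2 * (1/4) = (1:ℝ)/8 by norm_num]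
    exact mul_le_mul_of_nonneg_right h414 (by positivity)
  -- final rewriting of goal
  have hg1 : (I6 ^ ((1:ℝ)/6)) ^ ((3:ℝ)/4) = I6 ^ ((1:ℝ)/8) := by
    rw [← Real.rpow_mul hI6nn]; norm_num
  have hg2 : (I2 ^ ((1:ℝ)/2)) ^ ((1:ℝ)/4) = I2 ^ ((1:ℝ)/8) := by
    rw [← Real.rpow_mul hI2nn]; norm_num
  rw [hg1, hg2]
  have hfin : |f z| ≤ I4 ^ ((1:ℝ)/4) + 2 * (I6 ^ ((1:ℝ)/8) * I2 ^ ((1:ℝ)/8)) :=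
    hstep1.trans (hstep2.trans (by linarith))
  have hring : 2 * I6 ^ ((1:ℝ)/8) * I2 ^ ((1:ℝ)/8)
      = 2 * (I6 ^ ((1:ℝ)/8) * I2 ^ ((1:ℝ)/8)) := by ring
  rw [hring]
  linarith
end
end

section
/- Let Ω = [0,L]² × [0,1] with periodic boundary conditions and g ∈ H¹_h(Ω) (i.e., g and its horizontal gradient ∇_h g are in L²(Ω)). Then ∫_{[0,L]²} (∫₀¹ g(x,y,z)² dz)² dx dy ≤ C ‖g‖_{L²(Ω)}² ( ‖g‖_{L²(Ω)}² + ‖∇_h g‖_{L²(Ω)}² ), for a constant C depending only on L. -/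
open MeasureTheory Set

noncomputable section

private lemma aux_contParam {X : Type*} [TopologicalSpace X] [FirstCountableTopology X]
    (f : X → ℝ → ℝ)
    (hf : Continuous fun p : X × ℝ => f p.1 p.2) {M : ℝ}
    (hb : ∀ x t, |f x t| ≤ M) {s : Set ℝ} (hs : volume s ≠ ⊤) :
    Continuous fun x => ∫ t in s, f x t := by
  refine continuous_of_dominated (bound := fun _ => M)
    (fun x => (hf.comp (Continuous.prodMk_right x)).aestronglyMeasurable)
    (fun x => ae_of_all _ fun t => by simpa [Real.norm_eq_abs] using hb x t)
    (integrableOn_const hs)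
    (ae_of_all _ fun t => hf.comp (continuous_id.prodMk continuous_const))

private lemma aux_absIntLe {a b M : ℝ} (hab : a ≤ b) {f : ℝ → ℝ}
    (hfm : AEStronglyMeasurable f (volume.restrict (Icc a b)))
    (hb : ∀ t, |f t| ≤ M) :
    |∫ t in Icc a b, f t| ≤ M * (b - a) := by
  have h := norm_setIntegral_le_of_norm_le_const (μ := volume) (s := Icc a b) (C := M) (f := f)
    measure_Icc_lt_top (fun x _ => by simpa [Real.norm_eq_abs] using hb x)
  simpa [Real.volume_real_Icc, max_eq_left (sub_nonneg.2 hab), Real.volume_Icc, Real.norm_eq_abs, ENNReal.toReal_ofReal (sub_nonneg.2 hab)] using h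

private lemma aux_swap (f : ℝ → ℝ → ℝ)
    (hf : Continuous fun p : ℝ × ℝ => f p.1 p.2) {M : ℝ}
    (hb : ∀ x y, |f x y| ≤ M) {s t : Set ℝ}
    (hs : volume s ≠ ⊤) (ht : volume t ≠ ⊤) :
    ∫ x in s, ∫ y in t, f x y = ∫ y in t, ∫ x in s, f x y := by
  apply integral_integral_swap
  show Integrable (fun p : ℝ × ℝ => f p.1 p.2) _
  rw [Measure.prod_restrict]
  have hμ : (volume.prod volume) (s ×ˢ t) ≠ ⊤ := by
    rw [Measure.prod_prod]; exact ENNReal.mul_ne_top hs ht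
  exact Integrable.mono' (integrableOn_const hμ) hf.aestronglyMeasurable
    (ae_of_all _ fun p => by simpa [Real.norm_eq_abs] using hb p.1 p.2)

private lemma aux_min {L : ℝ} (hL : 0 < L) {f : ℝ → ℝ} (hf : Continuous f) :
    ∃ x₀ ∈ Icc (0:ℝ) L, f x₀ * L ≤ ∫ x in Icc (0:ℝ) L, f x := by
  obtain ⟨x₀, hx₀, hmin⟩ := isCompact_Icc.exists_isMinOn (nonempty_Icc.2 hL.le) hf.continuousOn
  refine ⟨x₀, hx₀, ?_⟩
  have h := setIntegral_ge_of_const_le_real (μ := volume) (c := f x₀) measurableSet_Icc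
    measure_Icc_lt_top.ne (fun x hx => hmin hx) hf.integrableOn_Icc
  simpa [Real.volume_real_Icc, max_eq_left hL.le, Real.volume_Icc, ENNReal.toReal_ofReal hL.le] using h

private lemma aux_boxCompact (L : ℝ) : IsCompact (Box L) :=
  isCompact_Icc.prod (isCompact_Icc.prod isCompact_Icc)

private lemma aux_box (L : ℝ) (f : ℝ × ℝ × ℝ → ℝ) (hf : Continuous f) :
    ∫ p in Box L, f p
      = ∫ x in Icc (0:ℝ) L, ∫ y in Icc (0:ℝ) L, ∫ z in Icc (0:ℝ) 1, f (x, y, z) := by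
  have h1 : IntegrableOn f (Icc (0:ℝ) L ×ˢ Icc (0:ℝ) L ×ˢ Icc (0:ℝ) 1)
      ((volume : Measure ℝ).prod (volume : Measure (ℝ × ℝ))) := by
    rw [← Measure.volume_eq_prod]
    exact hf.continuousOn.integrableOn_compact (aux_boxCompact L)
  rw [Box, Measure.volume_eq_prod, setIntegral_prod _ h1]
  refine integral_congr_ae (ae_of_all _ fun x => ?_)
  have h2 : IntegrableOn (fun w : ℝ × ℝ => f (x, w)) (Icc (0:ℝ) L ×ˢ Icc (0:ℝ) 1)
      ((volume : Measure ℝ).prod (volume : Measure ℝ)) := by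
    rw [← Measure.volume_eq_prod]
    exact (hf.comp (Continuous.prodMk_right x)).continuousOn.integrableOn_compact
      (isCompact_Icc.prod isCompact_Icc)
  exact setIntegral_prod (fun w : ℝ × ℝ => f (x, w)) h2

private lemma aux_sq (L : ℝ) (f : ℝ × ℝ → ℝ) (hf : Continuous f) :
    ∫ q in Sq L, f q = ∫ x in Icc (0:ℝ) L, ∫ y in Icc (0:ℝ) L, f (x, y) := by
  have h1 : IntegrableOn f (Icc (0:ℝ) L ×ˢ Icc (0:ℝ) L)
      ((volume : Measure ℝ).prod (volume : Measure ℝ)) := by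
    rw [← Measure.volume_eq_prod]
    exact hf.continuousOn.integrableOn_compact (isCompact_Icc.prod isCompact_Icc)
  rw [Sq, Measure.volume_eq_prod, setIntegral_prod _ h1]

private lemma aux_bdd {L : ℝ} (hL : 0 < L) (f : ℝ × ℝ × ℝ → ℝ) (hf : Continuous f)
    (h1 : ∀ x y z : ℝ, f (x + L, y, z) = f (x, y, z))
    (h2 : ∀ x y z : ℝ, f (x, y + L, z) = f (x, y, z))
    (h3 : ∀ x y z : ℝ, f (x, y, z + 1) = f (x, y, z)) :
    ∃ M, 0 ≤ M ∧ ∀ p, |f p| ≤ M := by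
  obtain ⟨C, hC⟩ := (aux_boxCompact L).exists_bound_of_continuousOn hf.continuousOn
  refine ⟨max C 0, le_max_right _ _, ?_⟩
  rintro ⟨x, y, z⟩
  obtain ⟨x', hx', hxe⟩ :=
    (show Function.Periodic (fun s => f (s, y, z)) L from fun s => h1 s y z).exists_mem_Ico₀ hL x
  obtain ⟨y', hy', hye⟩ :=
    (show Function.Periodic (fun s => f (x', s, z)) L from fun s => h2 x' s z).exists_mem_Ico₀ hL y
  obtain ⟨z', hz', hze⟩ :=
    (show Function.Periodic (fun s => f (x', y', s)) 1 from fun s => h3 x' y' s).exists_mem_Ico₀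
      one_pos z
  have hmem : ((x', y', z') : ℝ × ℝ × ℝ) ∈ Box L :=
    ⟨Ico_subset_Icc_self hx', Ico_subset_Icc_self hy', Ico_subset_Icc_self hz'⟩
  calc |f (x, y, z)| = |f (x', y', z')| := by rw [hxe, hye, hze]
  _ ≤ C := by simpa [Real.norm_eq_abs] using hC _ hmem
  _ ≤ max C 0 := le_max_left _ _

private lemma aux_ftc {LL : ℝ} {u u' : ℝ → ℝ} (hu : ∀ t, HasDerivAt u (u' t) t)
    (hu'c : Continuous u') {x₀ x : ℝ} (hx₀ : x₀ ∈ Icc (0:ℝ) LL) (hx : x ∈ Icc (0:ℝ) LL) :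
    u x ^ 2 - u x₀ ^ 2 ≤ ∫ t in Icc (0:ℝ) LL, |2 * u t * u' t| := by
  have huc : Continuous u := by
    rw [continuous_iff_continuousAt]; exact fun t => (hu t).continuousAt
  have hci : Continuous fun t => 2 * u t * u' t := (continuous_const.mul huc).mul hu'c
  have hftc := intervalIntegral.integral_eq_sub_of_hasDerivAt
    (f := fun s => u s ^ 2) (f' := fun t => 2 * u t * u' t)
    (fun t _ => by simpa using (hu t).fun_pow 2) (hci.intervalIntegrable x₀ x)
  calc u x ^ 2 - u x₀ ^ 2 = ∫ t in x₀..x, 2 * u t * u' t := hftc.symm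
  _ ≤ |∫ t in x₀..x, 2 * u t * u' t| := le_abs_self _
  _ ≤ ∫ t in Set.uIoc x₀ x, |2 * u t * u' t| := by
      simpa only [Real.norm_eq_abs] using intervalIntegral.norm_integral_le_integral_norm_uIoc
        (f := fun t => 2 * u t * u' t) (a := x₀) (b := x) (μ := volume)
  _ ≤ ∫ t in Icc (0:ℝ) LL, |2 * u t * u' t| :=
      setIntegral_mono_set hci.abs.integrableOn_Icc
        (ae_of_all _ fun t => abs_nonneg _)
        ((uIoc_subset_uIcc.trans (uIcc_subset_Icc hx₀ hx)).eventuallyLE)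

private lemma aux_fderiv_per {g : ℝ × ℝ × ℝ → ℝ} (hgd : Differentiable ℝ g)
    {c : ℝ × ℝ × ℝ} (hc : ∀ p, g (p + c) = g p) (p : ℝ × ℝ × ℝ) :
    fderiv ℝ g (p + c) = fderiv ℝ g p := by
  have h1 : HasFDerivAt (fun q : ℝ × ℝ × ℝ => g (q + c))
      ((fderiv ℝ g (p + c)).comp (ContinuousLinearMap.id ℝ (ℝ × ℝ × ℝ))) p :=
    (hgd (p + c)).hasFDerivAt.comp p ((hasFDerivAt_id p).add_const c)
  rw [funext hc] at h1
  have h2 := h1.fderiv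
  rw [ContinuousLinearMap.comp_id] at h2
  exact h2.symm

private lemma aux_addmk (x y z a b c : ℝ) :
    ((x, y, z) : ℝ × ℝ × ℝ) + (a, b, c) = (x + a, y + b, z + c) := rfl

private lemma aux_CS {L : ℝ} (u v : ℝ × ℝ × ℝ → ℝ) (hu : Continuous u) (hv : Continuous v)
    {Mu Mv : ℝ} (hbu : ∀ p, |u p| ≤ Mu) (hbv : ∀ p, |v p| ≤ Mv) :
    (∫ p in Box L, |2 * u p * v p|)
      ≤ 2 * Real.sqrt (∫ p in Box L, u p ^ 2) * Real.sqrt (∫ p in Box L, v p ^ 2) := by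
  haveI : IsFiniteMeasure (volume.restrict (Box L)) :=
    ⟨by rw [Measure.restrict_apply_univ]; exact (aux_boxCompact L).measure_lt_top⟩
  have h2 : Real.HolderConjugate 2 2 := Real.HolderConjugate.two_two
  have hmu : MemLp (fun p => |u p|) (ENNReal.ofReal 2) (volume.restrict (Box L)) :=
    MemLp.of_bound hu.abs.aestronglyMeasurable Mu
      (ae_of_all _ fun p => by simpa [Real.norm_eq_abs, abs_abs] using hbu p)
  have hmv : MemLp (fun p => |v p|) (ENNReal.ofReal 2) (volume.restrict (Box L)) :=
    MemLp.of_bound hv.abs.aestronglyMeasurable Mv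
      (ae_of_all _ fun p => by simpa [Real.norm_eq_abs, abs_abs] using hbv p)
  have h := integral_mul_le_Lp_mul_Lq_of_nonneg h2
    (ae_of_all _ fun p => abs_nonneg (u p)) (ae_of_all _ fun p => abs_nonneg (v p)) hmu hmv
  have hru : (∫ p in Box L, |u p| ^ (2:ℝ)) = ∫ p in Box L, u p ^ 2 :=
    integral_congr_ae (ae_of_all _ fun p => by
      simp only [Real.rpow_two, sq_abs])
  have hrv : (∫ p in Box L, |v p| ^ (2:ℝ)) = ∫ p in Box L, v p ^ 2 :=
    integral_congr_ae (ae_of_all _ fun p => by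
      simp only [Real.rpow_two, sq_abs])
  rw [hru, hrv] at h
  calc (∫ p in Box L, |2 * u p * v p|) = 2 * ∫ p in Box L, |u p| * |v p| := by
        rw [← integral_const_mul]
        exact integral_congr_ae (ae_of_all _ fun p => by simp only [abs_mul, abs_two]; ring)
  _ ≤ 2 * ((∫ p in Box L, u p ^ 2) ^ ((1:ℝ)/2) * (∫ p in Box L, v p ^ 2) ^ ((1:ℝ)/2)) := by
        nlinarith [h]
  _ = 2 * Real.sqrt (∫ p in Box L, u p ^ 2) * Real.sqrt (∫ p in Box L, v p ^ 2) := by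
        rw [Real.sqrt_eq_rpow, Real.sqrt_eq_rpow]; ring
set_option maxHeartbeats 1600000 in
/-- ∫_{[0,L]²} (∫₀¹ g² dz)² dxdy ≤ C ‖g‖₂² (‖g‖₂² + ‖∇_h g‖₂²). -/
theorem stmt7 (L : ℝ) (hL : 0 < L) :
    ∃ C : ℝ, 0 < C ∧ ∀ g : ℝ × ℝ × ℝ → ℝ, ContDiff ℝ (⊤ : ℕ∞) g → Per L g →
      (∫ q in Sq L, (∫ z in (0:ℝ)..1, g (q.1, q.2, z) ^ 2) ^ 2)
        ≤ C * (∫ p in Box L, (g p) ^ 2)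
            * ((∫ p in Box L, (g p) ^ 2)
                + ∫ p in Box L, (pdx g p) ^ 2 + (pdy g p) ^ 2) := by
  refine ⟨(1/L)^2 + 2*(1/L) + 2, by positivity, ?_⟩
  intro g hg hper
  obtain ⟨hper1, hper2, hper3⟩ := hper
  have hgc : Continuous g := hg.continuous
  have hgd : Differentiable ℝ g := hg.differentiable (by simp)
  have hfd : Continuous (fderiv ℝ g) := hg.continuous_fderiv (by simp)
  have hpdxc : Continuous (pdx g) := hfd.clm_apply continuous_const
  have hpdyc : Continuous (pdy g) := hfd.clm_apply continuous_const
  -- translation invariance in vector form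
  have hadd1 : ∀ p : ℝ × ℝ × ℝ, g (p + ((L:ℝ), 0, 0)) = g p := by
    rintro ⟨x, y, z⟩; rw [aux_addmk]; simpa using hper1 x y z
  have hadd2 : ∀ p : ℝ × ℝ × ℝ, g (p + ((0:ℝ), L, 0)) = g p := by
    rintro ⟨x, y, z⟩; rw [aux_addmk]; simpa using hper2 x y z
  have hadd3 : ∀ p : ℝ × ℝ × ℝ, g (p + ((0:ℝ), 0, 1)) = g p := by
    rintro ⟨x, y, z⟩; rw [aux_addmk]; simpa using hper3 x y z
  -- periodicity of the partial derivatives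
  have hpdper : ∀ v : ℝ × ℝ × ℝ,
      (∀ x y z : ℝ, fderiv ℝ g (x + L, y, z) v = fderiv ℝ g (x, y, z) v) ∧
      (∀ x y z : ℝ, fderiv ℝ g (x, y + L, z) v = fderiv ℝ g (x, y, z) v) ∧
      (∀ x y z : ℝ, fderiv ℝ g (x, y, z + 1) v = fderiv ℝ g (x, y, z) v) := by
    intro v
    refine ⟨fun x y z => ?_, fun x y z => ?_, fun x y z => ?_⟩
    · have h := aux_fderiv_per hgd hadd1 (x, y, z)
      rw [aux_addmk] at h; simp only [add_zero] at h; rw [h]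
    · have h := aux_fderiv_per hgd hadd2 (x, y, z)
      rw [aux_addmk] at h; simp only [add_zero] at h; rw [h]
    · have h := aux_fderiv_per hgd hadd3 (x, y, z)
      rw [aux_addmk] at h; simp only [add_zero] at h; rw [h]
  -- global bounds
  obtain ⟨M₁, hM₁0, hM₁⟩ := aux_bdd hL g hgc hper1 hper2 hper3
  obtain ⟨M₂, hM₂0, hM₂⟩ := aux_bdd hL (pdx g) hpdxc
    (hpdper (1,0,0)).1 (hpdper (1,0,0)).2.1 (hpdper (1,0,0)).2.2
  obtain ⟨M₃, hM₃0, hM₃⟩ := aux_bdd hL (pdy g) hpdyc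
    (hpdper (0,1,0)).1 (hpdper (0,1,0)).2.1 (hpdper (0,1,0)).2.2
  set M : ℝ := max M₁ (max M₂ M₃) with hM_def
  have hM0 : 0 ≤ M := le_trans hM₁0 (le_max_left _ _)
  have hMg : ∀ p, |g p| ≤ M := fun p => (hM₁ p).trans (le_max_left _ _)
  have hMx : ∀ p, |pdx g p| ≤ M :=
    fun p => (hM₂ p).trans ((le_max_left _ _).trans (le_max_right _ _))
  have hMy : ∀ p, |pdy g p| ≤ M :=
    fun p => (hM₃ p).trans ((le_max_right _ _).trans (le_max_right _ _))
  have h2gx : ∀ p, |2 * g p * pdx g p| ≤ 2 * M ^ 2 := fun p => by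
    rw [abs_mul, abs_mul, abs_two]
    nlinarith [hMg p, hMx p, abs_nonneg (g p), abs_nonneg (pdx g p)]
  have h2gy : ∀ p, |2 * g p * pdy g p| ≤ 2 * M ^ 2 := fun p => by
    rw [abs_mul, abs_mul, abs_two]
    nlinarith [hMg p, hMy p, abs_nonneg (g p), abs_nonneg (pdy g p)]
  have hIccL : volume (Icc (0:ℝ) L) ≠ ⊤ := measure_Icc_lt_top.ne
  have hIcc1 : volume (Icc (0:ℝ) 1) ≠ ⊤ := measure_Icc_lt_top.ne
  -- curves
  have hcx : ∀ y z : ℝ, Continuous fun t : ℝ => ((t, y, z) : ℝ × ℝ × ℝ) :=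
    fun y z => continuous_id.prodMk (continuous_const.prodMk continuous_const)
  have hcy : ∀ x z : ℝ, Continuous fun t : ℝ => ((x, t, z) : ℝ × ℝ × ℝ) :=
    fun x z => continuous_const.prodMk (continuous_id.prodMk continuous_const)
  have hcz : ∀ x y : ℝ, Continuous fun t : ℝ => ((x, y, t) : ℝ × ℝ × ℝ) :=
    fun x y => continuous_const.prodMk (continuous_const.prodMk continuous_id)
  -- the main quantities
  set A := ∫ p in Box L, g p ^ 2 with hA_def
  set Bx := ∫ p in Box L, pdx g p ^ 2 with hBx_def
  set By := ∫ p in Box L, pdy g p ^ 2 with hBy_def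
  set F : ℝ → ℝ → ℝ := fun x y => ∫ z in Icc (0:ℝ) 1, g (x, y, z) ^ 2 with hF_def
  set KX : ℝ → ℝ → ℝ :=
    fun y z => ∫ t in Icc (0:ℝ) L, |2 * g (t, y, z) * pdx g (t, y, z)| with hKX_def
  set KY : ℝ → ℝ → ℝ :=
    fun x z => ∫ t in Icc (0:ℝ) L, |2 * g (x, t, z) * pdy g (x, t, z)| with hKY_def
  set DX : ℝ → ℝ := fun y => ∫ z in Icc (0:ℝ) 1, KX y z with hDX_def
  set DY : ℝ → ℝ := fun x => ∫ z in Icc (0:ℝ) 1, KY x z with hDY_def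
  set PY : ℝ → ℝ := fun y => (1 / L) * (∫ x in Icc (0:ℝ) L, F x y) + DX y with hPY_def
  set QX : ℝ → ℝ := fun x => (1 / L) * (∫ y in Icc (0:ℝ) L, F x y) + DY x with hQX_def
  -- continuity of F
  have hprojc : Continuous fun p : (ℝ × ℝ) × ℝ => ((p.1.1, p.1.2, p.2) : ℝ × ℝ × ℝ) :=
    (continuous_fst.fst).prodMk ((continuous_fst.snd).prodMk continuous_snd)
  have hFc : Continuous fun q : ℝ × ℝ => F q.1 q.2 := by
    simp only [hF_def]
    exact aux_contParam (fun (q : ℝ × ℝ) z => g (q.1, q.2, z) ^ 2) ((hgc.comp hprojc).pow 2)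
      (M := M ^ 2)
      (fun q z => by rw [abs_pow]; exact pow_le_pow_left₀ (abs_nonneg _) (hMg _) 2) hIcc1
  have hsec : ∀ x y : ℝ, Continuous fun z : ℝ => g (x, y, z) ^ 2 :=
    fun x y => (hgc.comp (hcz x y)).pow 2
  have hFb : ∀ x y, |F x y| ≤ M ^ 2 := by
    intro x y
    rw [hF_def]
    have h := aux_absIntLe zero_le_one (hsec x y).aestronglyMeasurable (M := M ^ 2)
      (fun z => by rw [abs_pow]; exact pow_le_pow_left₀ (abs_nonneg _) (hMg _) 2)
    simpa using h
  have hFnn : ∀ x y, 0 ≤ F x y := by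
    intro x y; rw [hF_def]
    exact setIntegral_nonneg measurableSet_Icc fun z _ => sq_nonneg _
  -- continuity of KX, KY
  have hprojzy : Continuous fun p : (ℝ × ℝ) × ℝ => ((p.2, p.1.1, p.1.2) : ℝ × ℝ × ℝ) :=
    continuous_snd.prodMk (continuous_fst.fst.prodMk continuous_fst.snd)
  have hKXc : Continuous fun q : ℝ × ℝ => KX q.1 q.2 := by
    simp only [hKX_def]
    exact aux_contParam (fun (q : ℝ × ℝ) t => |2 * g (t, q.1, q.2) * pdx g (t, q.1, q.2)|)
      (((continuous_const.mul (hgc.comp hprojzy)).mul (hpdxc.comp hprojzy)).abs)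
      (M := 2 * M ^ 2) (fun q t => by rw [abs_abs]; exact h2gx _) hIccL
  have hprojxz : Continuous fun p : (ℝ × ℝ) × ℝ => ((p.1.1, p.2, p.1.2) : ℝ × ℝ × ℝ) :=
    continuous_fst.fst.prodMk (continuous_snd.prodMk continuous_fst.snd)
  have hKYc : Continuous fun q : ℝ × ℝ => KY q.1 q.2 := by
    simp only [hKY_def]
    exact aux_contParam (fun (q : ℝ × ℝ) t => |2 * g (q.1, t, q.2) * pdy g (q.1, t, q.2)|)
      (((continuous_const.mul (hgc.comp hprojxz)).mul (hpdyc.comp hprojxz)).abs)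
      (M := 2 * M ^ 2) (fun q t => by rw [abs_abs]; exact h2gy _) hIccL
  have hgx_abs_c : ∀ y z : ℝ, Continuous fun t : ℝ => |2 * g (t, y, z) * pdx g (t, y, z)| :=
    fun y z => ((continuous_const.mul (hgc.comp (hcx y z))).mul (hpdxc.comp (hcx y z))).abs
  have hgy_abs_c : ∀ x z : ℝ, Continuous fun t : ℝ => |2 * g (x, t, z) * pdy g (x, t, z)| :=
    fun x z => ((continuous_const.mul (hgc.comp (hcy x z))).mul (hpdyc.comp (hcy x z))).abs
  have hKXb : ∀ y z, |KX y z| ≤ 2 * M ^ 2 * L := by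
    intro y z
    rw [hKX_def]
    have h := aux_absIntLe hL.le (hgx_abs_c y z).aestronglyMeasurable (M := 2 * M ^ 2)
      (fun t => by rw [abs_abs]; exact h2gx _)
    simpa using h
  have hKYb : ∀ x z, |KY x z| ≤ 2 * M ^ 2 * L := by
    intro x z
    rw [hKY_def]
    have h := aux_absIntLe hL.le (hgy_abs_c x z).aestronglyMeasurable (M := 2 * M ^ 2)
      (fun t => by rw [abs_abs]; exact h2gy _)
    simpa using h
  have hDXc : Continuous DX := by
    rw [hDX_def]
    exact aux_contParam KX hKXc (M := 2 * M ^ 2 * L) hKXb hIcc1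
  have hDYc : Continuous DY := by
    rw [hDY_def]
    exact aux_contParam KY hKYc (M := 2 * M ^ 2 * L) hKYb hIcc1
  have hFswapc : Continuous fun q : ℝ × ℝ => F q.2 q.1 :=
    hFc.comp (continuous_snd.prodMk continuous_fst)
  have hIntFy_c : Continuous fun y => ∫ x in Icc (0:ℝ) L, F x y :=
    aux_contParam (fun y x => F x y) hFswapc (M := M ^ 2) (fun y x => hFb x y) hIccL
  have hIntFx_c : Continuous fun x => ∫ y in Icc (0:ℝ) L, F x y :=
    aux_contParam (fun x y => F x y) hFc (M := M ^ 2) (fun x y => hFb x y) hIccL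
  have hPYc : Continuous PY := by
    rw [hPY_def]
    exact (continuous_const.mul hIntFy_c).add hDXc
  have hQXc : Continuous QX := by
    rw [hQX_def]
    exact (continuous_const.mul hIntFx_c).add hDYc
  -- nonnegativity
  have hKXnn : ∀ y z, 0 ≤ KX y z := by
    intro y z; rw [hKX_def]
    exact setIntegral_nonneg measurableSet_Icc fun t _ => abs_nonneg _
  have hKYnn : ∀ x z, 0 ≤ KY x z := by
    intro x z; rw [hKY_def]
    exact setIntegral_nonneg measurableSet_Icc fun t _ => abs_nonneg _
  have hDXnn : ∀ y, 0 ≤ DX y := by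
    intro y; rw [hDX_def]
    exact setIntegral_nonneg measurableSet_Icc fun z _ => hKXnn y z
  have hDYnn : ∀ x, 0 ≤ DY x := by
    intro x; rw [hDY_def]
    exact setIntegral_nonneg measurableSet_Icc fun z _ => hKYnn x z
  have hPYnn : ∀ y, 0 ≤ PY y := by
    intro y; rw [hPY_def]
    exact add_nonneg (mul_nonneg (by positivity)
      (setIntegral_nonneg measurableSet_Icc fun s _ => hFnn s y)) (hDXnn y)
  have hQXnn : ∀ x, 0 ≤ QX x := by
    intro x; rw [hQX_def]
    exact add_nonneg (mul_nonneg (by positivity)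
      (setIntegral_nonneg measurableSet_Icc fun s _ => hFnn x s)) (hDYnn x)
  -- pointwise bounds
  have hFP : ∀ (y : ℝ), ∀ x ∈ Icc (0:ℝ) L, F x y ≤ PY y := by
    intro y x hx
    obtain ⟨x₀, hx₀, hmin⟩ := aux_min hL
      (hFc.comp ((continuous_id.prodMk continuous_const) : Continuous fun s : ℝ => (s, y)))
    have hdiff : F x y - F x₀ y ≤ DX y := by
      have hpt : ∀ z : ℝ, g (x, y, z) ^ 2 - g (x₀, y, z) ^ 2 ≤ KX y z := by
        intro z
        rw [hKX_def]
        exact aux_ftc (u := fun t => g (t, y, z)) (u' := fun t => pdx g (t, y, z))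
          (fun t => (hgd (t, y, z)).hasFDerivAt.comp_hasDerivAt t
            ((hasDerivAt_id t).prodMk ((hasDerivAt_const t y).prodMk (hasDerivAt_const t z))))
          (hpdxc.comp (hcx y z)) hx₀ hx
      have h1 : F x y - F x₀ y = ∫ z in Icc (0:ℝ) 1, (g (x, y, z) ^ 2 - g (x₀, y, z) ^ 2) := by
        rw [hF_def]
        exact (integral_sub (hsec x y).integrableOn_Icc (hsec x₀ y).integrableOn_Icc).symm
      rw [h1, hDX_def]
      exact setIntegral_mono_on ((hsec x y).sub (hsec x₀ y)).integrableOn_Icc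
        ((hKXc.comp (Continuous.prodMk_right y)).integrableOn_Icc) measurableSet_Icc
        fun z _ => hpt z
    have h₀ : F x₀ y ≤ (1 / L) * ∫ s in Icc (0:ℝ) L, F s y := by
      rw [one_div, ← div_eq_inv_mul]; exact (le_div_iff₀ hL).2 hmin
    rw [hPY_def]
    dsimp only
    linarith
  have hFQ : ∀ (x : ℝ), ∀ y ∈ Icc (0:ℝ) L, F x y ≤ QX x := by
    intro x y hy
    obtain ⟨y₀, hy₀, hmin⟩ := aux_min hL
      (hFc.comp ((continuous_const.prodMk continuous_id) : Continuous fun s : ℝ => (x, s)))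
    have hdiff : F x y - F x y₀ ≤ DY x := by
      have hpt : ∀ z : ℝ, g (x, y, z) ^ 2 - g (x, y₀, z) ^ 2 ≤ KY x z := by
        intro z
        rw [hKY_def]
        exact aux_ftc (u := fun t => g (x, t, z)) (u' := fun t => pdy g (x, t, z))
          (fun t => (hgd (x, t, z)).hasFDerivAt.comp_hasDerivAt t
            ((hasDerivAt_const t x).prodMk ((hasDerivAt_id t).prodMk (hasDerivAt_const t z))))
          (hpdyc.comp (hcy x z)) hy₀ hy
      have h1 : F x y - F x y₀ = ∫ z in Icc (0:ℝ) 1, (g (x, y, z) ^ 2 - g (x, y₀, z) ^ 2) := by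
        rw [hF_def]
        exact (integral_sub (hsec x y).integrableOn_Icc (hsec x y₀).integrableOn_Icc).symm
      rw [h1, hDY_def]
      exact setIntegral_mono_on ((hsec x y).sub (hsec x y₀)).integrableOn_Icc
        ((hKYc.comp (Continuous.prodMk_right x)).integrableOn_Icc) measurableSet_Icc
        fun z _ => hpt z
    have h₀ : F x y₀ ≤ (1 / L) * ∫ s in Icc (0:ℝ) L, F x s := by
      rw [one_div, ← div_eq_inv_mul]; exact (le_div_iff₀ hL).2 hmin
    rw [hQX_def]
    dsimp only
    linarith
  -- the double-integral bound
  have step1 : ∀ x ∈ Icc (0:ℝ) L,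
      (∫ y in Icc (0:ℝ) L, F x y ^ 2) ≤ QX x * ∫ y in Icc (0:ℝ) L, PY y := by
    intro x hx
    have hmono : (∫ y in Icc (0:ℝ) L, F x y ^ 2) ≤ ∫ y in Icc (0:ℝ) L, QX x * PY y :=
      setIntegral_mono_on (((hFc.comp (Continuous.prodMk_right x)).pow 2).integrableOn_Icc)
        ((continuous_const.mul hPYc).integrableOn_Icc) measurableSet_Icc
        (fun y hy => by nlinarith [hFQ x y hy, hFP y x hx, hFnn x y, hQXnn x])
    rwa [integral_const_mul] at hmono
  have step2 : (∫ x in Icc (0:ℝ) L, ∫ y in Icc (0:ℝ) L, F x y ^ 2)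
      ≤ (∫ x in Icc (0:ℝ) L, QX x) * ∫ y in Icc (0:ℝ) L, PY y := by
    have hsqc : Continuous fun x => ∫ y in Icc (0:ℝ) L, F x y ^ 2 :=
      aux_contParam (fun x y => F x y ^ 2) (hFc.pow 2) (M := (M ^ 2) ^ 2)
        (fun x y => by rw [abs_pow]; exact pow_le_pow_left₀ (abs_nonneg _) (hFb x y) 2) hIccL
    have hmono := setIntegral_mono_on (hsqc.integrableOn_Icc (μ := volume))
      ((hQXc.mul continuous_const).integrableOn_Icc (μ := volume)) measurableSet_Icc step1
    simp only [Pi.mul_apply] at hmono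
    rwa [integral_mul_const] at hmono
  -- identities for A
  have hAiter : A = ∫ x in Icc (0:ℝ) L, ∫ y in Icc (0:ℝ) L, F x y := by
    rw [hA_def, hF_def]
    exact aux_box L (fun p => g p ^ 2) (hgc.pow 2)
  -- ∫ PY
  have hCSx : (∫ p in Box L, |2 * g p * pdx g p|) ≤ 2 * Real.sqrt A * Real.sqrt Bx := by
    rw [hA_def, hBx_def]
    exact aux_CS g (pdx g) hgc hpdxc hMg hMx
  have hCSy : (∫ p in Box L, |2 * g p * pdy g p|) ≤ 2 * Real.sqrt A * Real.sqrt By := by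
    rw [hA_def, hBy_def]
    exact aux_CS g (pdy g) hgc hpdyc hMg hMy
  have hPYint : (∫ y in Icc (0:ℝ) L, PY y) ≤ (1 / L) * A + 2 * Real.sqrt A * Real.sqrt Bx := by
    have hsplit : (∫ y in Icc (0:ℝ) L, PY y)
        = (1 / L) * (∫ y in Icc (0:ℝ) L, ∫ x in Icc (0:ℝ) L, F x y)
          + ∫ y in Icc (0:ℝ) L, DX y := by
      rw [hPY_def, ← integral_const_mul]
      exact integral_add ((continuous_const.mul hIntFy_c).integrableOn_Icc)
        hDXc.integrableOn_Icc
    have hswapF : (∫ y in Icc (0:ℝ) L, ∫ x in Icc (0:ℝ) L, F x y)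
        = ∫ x in Icc (0:ℝ) L, ∫ y in Icc (0:ℝ) L, F x y :=
      aux_swap (fun y x => F x y) hFswapc (M := M ^ 2) (fun y x => hFb x y) hIccL hIccL
    have hDXint : (∫ y in Icc (0:ℝ) L, DX y) = ∫ p in Box L, |2 * g p * pdx g p| := by
      have e1 : ∀ y : ℝ, DX y
          = ∫ t in Icc (0:ℝ) L, ∫ z in Icc (0:ℝ) 1, |2 * g (t, y, z) * pdx g (t, y, z)| := by
        intro y
        rw [hDX_def, hKX_def]
        exact aux_swap (fun z t => |2 * g (t, y, z) * pdx g (t, y, z)|)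
          (((continuous_const.mul (hgc.comp (continuous_snd.prodMk
            (continuous_const.prodMk continuous_fst)))).mul (hpdxc.comp
            (continuous_snd.prodMk (continuous_const.prodMk continuous_fst)))).abs)
          (M := 2 * M ^ 2) (fun z t => by rw [abs_abs]; exact h2gx _) hIcc1 hIccL
      have hGc : Continuous fun q : ℝ × ℝ =>
          ∫ z in Icc (0:ℝ) 1, |2 * g (q.2, q.1, z) * pdx g (q.2, q.1, z)| := by
        have hpr : Continuous fun p : (ℝ × ℝ) × ℝ => ((p.1.2, p.1.1, p.2) : ℝ × ℝ × ℝ) :=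
          continuous_fst.snd.prodMk (continuous_fst.fst.prodMk continuous_snd)
        exact aux_contParam (fun (q : ℝ × ℝ) z => |2 * g (q.2, q.1, z) * pdx g (q.2, q.1, z)|)
          (((continuous_const.mul (hgc.comp hpr)).mul (hpdxc.comp hpr)).abs)
          (M := 2 * M ^ 2) (fun q z => by rw [abs_abs]; exact h2gx _) hIcc1
      have e2 : (∫ y in Icc (0:ℝ) L, ∫ t in Icc (0:ℝ) L,
            ∫ z in Icc (0:ℝ) 1, |2 * g (t, y, z) * pdx g (t, y, z)|)
          = ∫ t in Icc (0:ℝ) L, ∫ y in Icc (0:ℝ) L,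
            ∫ z in Icc (0:ℝ) 1, |2 * g (t, y, z) * pdx g (t, y, z)| := by
        refine aux_swap
          (fun y t => ∫ z in Icc (0:ℝ) 1, |2 * g (t, y, z) * pdx g (t, y, z)|) hGc
          (M := 2 * M ^ 2 * 1) ?_ hIccL hIccL
        intro y t
        have h := aux_absIntLe zero_le_one
          (((continuous_const.mul (hgc.comp (hcz t y))).mul (hpdxc.comp (hcz t y))).abs
            ).aestronglyMeasurable
          (M := 2 * M ^ 2) (fun z => by rw [abs_abs]; exact h2gx _)
        simpa using h
      calc (∫ y in Icc (0:ℝ) L, DX y)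
          = ∫ y in Icc (0:ℝ) L, ∫ t in Icc (0:ℝ) L,
              ∫ z in Icc (0:ℝ) 1, |2 * g (t, y, z) * pdx g (t, y, z)| :=
            integral_congr_ae (ae_of_all _ fun y => e1 y)
        _ = ∫ t in Icc (0:ℝ) L, ∫ y in Icc (0:ℝ) L,
              ∫ z in Icc (0:ℝ) 1, |2 * g (t, y, z) * pdx g (t, y, z)| := e2
        _ = ∫ p in Box L, |2 * g p * pdx g p| :=
            (aux_box L (fun p => |2 * g p * pdx g p|)
              (((continuous_const.mul hgc).mul hpdxc).abs)).symm
    rw [hsplit, hswapF, hDXint, ← hAiter]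
    have := hCSx
    linarith
  -- ∫ QX
  have hQXint : (∫ x in Icc (0:ℝ) L, QX x) ≤ (1 / L) * A + 2 * Real.sqrt A * Real.sqrt By := by
    have hsplit : (∫ x in Icc (0:ℝ) L, QX x)
        = (1 / L) * (∫ x in Icc (0:ℝ) L, ∫ y in Icc (0:ℝ) L, F x y)
          + ∫ x in Icc (0:ℝ) L, DY x := by
      rw [hQX_def, ← integral_const_mul]
      exact integral_add ((continuous_const.mul hIntFx_c).integrableOn_Icc)
        hDYc.integrableOn_Icc
    have hDYint : (∫ x in Icc (0:ℝ) L, DY x) = ∫ p in Box L, |2 * g p * pdy g p| := by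
      have e1 : ∀ x : ℝ, DY x
          = ∫ t in Icc (0:ℝ) L, ∫ z in Icc (0:ℝ) 1, |2 * g (x, t, z) * pdy g (x, t, z)| := by
        intro x
        rw [hDY_def, hKY_def]
        exact aux_swap (fun z t => |2 * g (x, t, z) * pdy g (x, t, z)|)
          (((continuous_const.mul (hgc.comp (continuous_const.prodMk
            (continuous_snd.prodMk continuous_fst)))).mul (hpdyc.comp
            (continuous_const.prodMk (continuous_snd.prodMk continuous_fst)))).abs)
          (M := 2 * M ^ 2) (fun z t => by rw [abs_abs]; exact h2gy _) hIcc1 hIccL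
      calc (∫ x in Icc (0:ℝ) L, DY x)
          = ∫ x in Icc (0:ℝ) L, ∫ t in Icc (0:ℝ) L,
              ∫ z in Icc (0:ℝ) 1, |2 * g (x, t, z) * pdy g (x, t, z)| :=
            integral_congr_ae (ae_of_all _ fun x => e1 x)
        _ = ∫ p in Box L, |2 * g p * pdy g p| :=
            (aux_box L (fun p => |2 * g p * pdy g p|)
              (((continuous_const.mul hgc).mul hpdyc).abs)).symm
    rw [hsplit, hDYint, ← hAiter]
    have := hCSy
    linarith
  -- nonnegativity of A, Bx, By
  have hBoxm : MeasurableSet (Box L) :=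
    measurableSet_Icc.prod (measurableSet_Icc.prod measurableSet_Icc)
  have hAnn : 0 ≤ A := by
    rw [hA_def]; exact setIntegral_nonneg hBoxm fun p _ => sq_nonneg _
  have hBxnn : 0 ≤ Bx := by
    rw [hBx_def]; exact setIntegral_nonneg hBoxm fun p _ => sq_nonneg _
  have hBynn : 0 ≤ By := by
    rw [hBy_def]; exact setIntegral_nonneg hBoxm fun p _ => sq_nonneg _
  -- rewrite the goal
  have hBsum : (∫ p in Box L, (pdx g p ^ 2 + pdy g p ^ 2)) = Bx + By := by
    rw [hBx_def, hBy_def]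
    exact integral_add ((hpdxc.pow 2).continuousOn.integrableOn_compact (aux_boxCompact L))
      ((hpdyc.pow 2).continuousOn.integrableOn_compact (aux_boxCompact L))
  have hLHS : (∫ q in Sq L, (∫ z in (0:ℝ)..1, g (q.1, q.2, z) ^ 2) ^ 2)
      = ∫ x in Icc (0:ℝ) L, ∫ y in Icc (0:ℝ) L, F x y ^ 2 := by
    have h1 : ∀ q : ℝ × ℝ, (∫ z in (0:ℝ)..1, g (q.1, q.2, z) ^ 2) = F q.1 q.2 := by
      intro q
      rw [hF_def]
      dsimp only
      rw [intervalIntegral.integral_of_le zero_le_one, ← integral_Icc_eq_integral_Ioc]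
    calc (∫ q in Sq L, (∫ z in (0:ℝ)..1, g (q.1, q.2, z) ^ 2) ^ 2)
        = ∫ q in Sq L, F q.1 q.2 ^ 2 :=
          integral_congr_ae (ae_of_all _ fun q => by dsimp only; rw [h1 q])
      _ = ∫ x in Icc (0:ℝ) L, ∫ y in Icc (0:ℝ) L, F x y ^ 2 :=
          aux_sq L (fun q => F q.1 q.2 ^ 2) (hFc.pow 2)
  rw [hLHS, hBsum]
  -- final chain
  have hPYint_nn : 0 ≤ ∫ y in Icc (0:ℝ) L, PY y :=
    setIntegral_nonneg measurableSet_Icc fun y _ => hPYnn y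
  have hQbar_nn : 0 ≤ (1 / L) * A + 2 * Real.sqrt A * Real.sqrt By :=
    add_nonneg (mul_nonneg (by positivity) hAnn)
      (mul_nonneg (mul_nonneg (by norm_num) (Real.sqrt_nonneg _)) (Real.sqrt_nonneg _))
  have hprod : (∫ x in Icc (0:ℝ) L, ∫ y in Icc (0:ℝ) L, F x y ^ 2)
      ≤ ((1 / L) * A + 2 * Real.sqrt A * Real.sqrt By)
        * ((1 / L) * A + 2 * Real.sqrt A * Real.sqrt Bx) :=
    step2.trans (mul_le_mul hQXint hPYint hPYint_nn hQbar_nn)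
  refine hprod.trans ?_
  have ha2 : Real.sqrt A ^ 2 = A := Real.sq_sqrt hAnn
  have hbx2 : Real.sqrt Bx ^ 2 = Bx := Real.sq_sqrt hBxnn
  have hby2 : Real.sqrt By ^ 2 = By := Real.sq_sqrt hBynn
  have hd : (0:ℝ) < 1 / L := by positivity
  set a := Real.sqrt A
  set bb := Real.sqrt Bx
  set cc := Real.sqrt By
  rw [← ha2, ← hbx2, ← hby2]
  nlinarith [mul_nonneg (mul_nonneg (sq_nonneg a) hd.le) (sq_nonneg (a - bb)),
    mul_nonneg (mul_nonneg (sq_nonneg a) hd.le) (sq_nonneg (a - cc)),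
    mul_nonneg (sq_nonneg a) (sq_nonneg (bb - cc)),
    mul_nonneg (mul_nonneg (sq_nonneg a) (sq_nonneg (1 / L))) (sq_nonneg bb),
    mul_nonneg (mul_nonneg (sq_nonneg a) (sq_nonneg (1 / L))) (sq_nonneg cc),
    mul_nonneg (mul_nonneg (sq_nonneg a) hd.le) (sq_nonneg bb),
    mul_nonneg (mul_nonneg (sq_nonneg a) hd.le) (sq_nonneg cc),
    mul_nonneg (sq_nonneg a) (sq_nonneg a)]
end
end

section
/- Let f be a smooth periodic function on Ω = [0,L]² × [0,1]. Then ‖f‖_{L⁴(Ω)} ≤ C ‖f‖₂^{1/4} (‖f‖₂ + ‖∇_h f‖₂)^{1/2} (‖f‖₂ + ‖f_z‖₂)^{1/4}, where C depends only on L. -/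
open MeasureTheory Set

noncomputable section

/-- Cauchy–Schwarz for integrals. -/
lemma myCS {α : Type*} [MeasurableSpace α] {μ : Measure α} [IsFiniteMeasure μ]
    {u v : α → ℝ} (hu : MemLp u 2 μ) (hv : MemLp v 2 μ) :
    ∫ a, |u a * v a| ∂μ ≤ Real.sqrt (∫ a, u a ^ 2 ∂μ) * Real.sqrt (∫ a, v a ^ 2 ∂μ) := by
  have hpq : Real.HolderConjugate 2 2 := Real.HolderConjugate.two_two
  have h2 : (ENNReal.ofReal (2:ℝ)) = 2 := by norm_num
  have hu' : MemLp (fun a => |u a|) (ENNReal.ofReal (2:ℝ)) μ := by rw [h2]; exact hu.abs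
  have hv' : MemLp (fun a => |v a|) (ENNReal.ofReal (2:ℝ)) μ := by rw [h2]; exact hv.abs
  have := MeasureTheory.integral_mul_le_Lp_mul_Lq_of_nonneg hpq
    (Filter.Eventually.of_forall fun a => abs_nonneg (u a))
    (Filter.Eventually.of_forall fun a => abs_nonneg (v a)) hu' hv'
  have e1 : ∀ a, |u a| ^ (2:ℝ) = u a ^ 2 := fun a => by
    rw [show ((2:ℝ) = ((2:ℕ):ℝ)) by norm_num, Real.rpow_natCast, sq_abs]
  have e2 : ∀ a, |v a| ^ (2:ℝ) = v a ^ 2 := fun a => by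
    rw [show ((2:ℝ) = ((2:ℕ):ℝ)) by norm_num, Real.rpow_natCast, sq_abs]
  simp only [e1, e2, abs_mul] at this ⊢
  calc ∫ a, |u a| * |v a| ∂μ ≤ _ := this
  _ = _ := by rw [Real.sqrt_eq_rpow, Real.sqrt_eq_rpow]

/-- 1D averaged Agmon-type bound. -/
lemma myOneD {P : ℝ} (hP : 0 < P) {g g' : ℝ → ℝ} (hd : ∀ x, HasDerivAt g (g' x) x)
    (hgc : Continuous g) (hg'c : Continuous g') {t : ℝ} (ht : t ∈ Icc (0:ℝ) P) :
    g t ^ 2 ≤ (1/P) * (∫ s in Icc (0:ℝ) P, g s ^ 2) + 2 * (∫ s in Icc (0:ℝ) P, |g s * g' s|) := by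
  set J : ℝ := ∫ s in Icc (0:ℝ) P, |g s * g' s| with hJ
  have habs : Continuous fun u => |g u * g' u| := ((hgc.mul hg'c).abs)
  have hIoc : (∫ s in Icc (0:ℝ) P, |g s * g' s|) = ∫ s in (0:ℝ)..P, |g s * g' s| := by
    rw [intervalIntegral.integral_of_le hP.le, MeasureTheory.integral_Icc_eq_integral_Ioc]
  have key : ∀ s ∈ Icc (0:ℝ) P, g t ^ 2 ≤ g s ^ 2 + 2 * J := by
    intro s hs
    have hftc : (∫ u in s..t, 2 * g u * g' u) = g t ^ 2 - g s ^ 2 := by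
      apply intervalIntegral.integral_eq_sub_of_hasDerivAt
      · intro u _
        have := (hd u).fun_pow 2
        simpa [mul_comm, mul_assoc, mul_left_comm] using this
      · exact ((continuous_const.mul hgc).mul hg'c).intervalIntegrable _ _
    have h1 : g t ^ 2 - g s ^ 2 ≤ |∫ u in s..t, 2 * g u * g' u| := by
      rw [hftc] at *; exact le_abs_self _
    have h2 : |∫ u in s..t, 2 * g u * g' u| ≤ |∫ u in s..t, ‖2 * g u * g' u‖| := by
      simpa using intervalIntegral.norm_integral_le_abs_integral_norm
        (f := fun u => 2 * g u * g' u) (a := s) (b := t) (μ := volume)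
    have h3 : |∫ u in s..t, ‖2 * g u * g' u‖| ≤ |∫ u in (0:ℝ)..P, ‖2 * g u * g' u‖| := by
      apply intervalIntegral.abs_integral_mono_interval
      · rw [uIoc_of_le hP.le]
        exact Set.Ioc_subset_Ioc (le_min hs.1 ht.1) (max_le hs.2 ht.2)
      · exact Filter.Eventually.of_forall fun u => norm_nonneg _
      · exact (((continuous_const.mul hgc).mul hg'c).norm).intervalIntegrable _ _
    have h4 : |∫ u in (0:ℝ)..P, ‖2 * g u * g' u‖| = 2 * J := by
      have hnn : (0:ℝ) ≤ ∫ u in (0:ℝ)..P, ‖2 * g u * g' u‖ := by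
        apply intervalIntegral.integral_nonneg hP.le
        intro u _; exact norm_nonneg _
      rw [abs_of_nonneg hnn, hJ, hIoc, ← intervalIntegral.integral_const_mul]
      congr 1; ext u
      rw [Real.norm_eq_abs, abs_mul, abs_mul, abs_two, mul_assoc, abs_mul]
    nlinarith [h1, h2.trans (h3.trans_eq h4)]
  have hint1 : IntegrableOn (fun s => g s ^ 2 + 2 * J) (Icc (0:ℝ) P) volume :=
    ((((hgc.pow 2).add continuous_const).continuousOn).integrableOn_compact isCompact_Icc)
  have hmono : (∫ _ in Icc (0:ℝ) P, g t ^ 2) ≤ ∫ s in Icc (0:ℝ) P, (g s ^ 2 + 2 * J) := by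
    apply setIntegral_mono_on (integrableOn_const (by simp [Real.volume_Icc]))
      hint1 measurableSet_Icc key
  have hconst : (∫ _ in Icc (0:ℝ) P, g t ^ 2) = P * g t ^ 2 := by
    rw [setIntegral_const, measureReal_def, Real.volume_Icc, smul_eq_mul, sub_zero, ENNReal.toReal_ofReal hP.le]
  have hsplit : (∫ s in Icc (0:ℝ) P, (g s ^ 2 + 2 * J)) =
      (∫ s in Icc (0:ℝ) P, g s ^ 2) + P * (2 * J) := by
    rw [integral_add ((((hgc.pow 2).continuousOn).integrableOn_compact isCompact_Icc :
        IntegrableOn (fun s => g s ^ 2) (Icc (0:ℝ) P) volume))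
      (integrableOn_const (s := Icc (0:ℝ) P) (μ := volume) (by simp [Real.volume_Icc]))]
    rw [setIntegral_const, measureReal_def, Real.volume_Icc, smul_eq_mul, sub_zero, ENNReal.toReal_ofReal hP.le]
  rw [hconst, hsplit] at hmono
  have := mul_le_mul_of_nonneg_left hmono (le_of_lt (one_div_pos.2 hP))
  calc g t ^ 2 = (1/P) * (P * g t ^ 2) := by field_simp
  _ ≤ (1/P) * ((∫ s in Icc (0:ℝ) P, g s ^ 2) + P * (2 * J)) := this
  _ = (1/P) * (∫ s in Icc (0:ℝ) P, g s ^ 2) + 2 * J := by field_simp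


set_option maxHeartbeats 2000000 in
lemma key (L : ℝ) (hL : 0 < L) (f : ℝ × ℝ × ℝ → ℝ) (hf : ContDiff ℝ (⊤ : ℕ∞) f) :
    (∫ p in Box L, |f p| ^ 4)
      ≤ (4 * (max (1/L) 2)^2) * nL2 L f * (nL2 L f + nGH L f)^2
          * (nL2 L f + nL2 L (pdz f)) := by
  set μ : Measure ℝ := volume.restrict (Icc (0:ℝ) L) with hμ
  set ν : Measure ℝ := volume.restrict (Icc (0:ℝ) 1) with hν
  haveI hfinμ : IsFiniteMeasure μ := ⟨by
    rw [hμ, Measure.restrict_apply_univ]; exact measure_Icc_lt_top⟩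
  haveI hfinν : IsFiniteMeasure ν := ⟨by
    rw [hν, Measure.restrict_apply_univ]; exact measure_Icc_lt_top⟩
  have cBox : IsCompact (Box L) := isCompact_Icc.prod (isCompact_Icc.prod isCompact_Icc)
  have mBox : MeasurableSet (Box L) :=
    measurableSet_Icc.prod (measurableSet_Icc.prod measurableSet_Icc)
  have cSq : IsCompact (Sq L) := isCompact_Icc.prod isCompact_Icc
  have mSq : MeasurableSet (Sq L) := measurableSet_Icc.prod measurableSet_Icc
  have hresSq : (volume : Measure (ℝ×ℝ)).restrict (Sq L) = μ.prod μ := by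
    rw [Sq, Measure.volume_eq_prod, Measure.prod_restrict]
  have hresBox : (volume : Measure (ℝ×ℝ×ℝ)).restrict (Box L) = μ.prod (μ.prod ν) := by
    rw [Box, Measure.volume_eq_prod, Measure.prod_restrict,
      Measure.volume_eq_prod, Measure.prod_restrict]
  have hresSqI : (volume : Measure ((ℝ×ℝ)×ℝ)).restrict (Sq L ×ˢ Icc (0:ℝ) 1)
      = (μ.prod μ).prod ν := by
    rw [← hresSq, hν, Measure.prod_restrict]; rfl
  have hresISq : (volume : Measure (ℝ×(ℝ×ℝ))).restrict (Icc (0:ℝ) 1 ×ˢ Sq L)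
      = ν.prod (μ.prod μ) := by
    rw [← hresSq, hν, Measure.prod_restrict]; rfl
  have int3 : ∀ h : ℝ×ℝ×ℝ → ℝ, Continuous h → Integrable h (μ.prod (μ.prod ν)) := by
    intro h hc; rw [← hresBox]; exact hc.continuousOn.integrableOn_compact cBox
  have int2 : ∀ h : ℝ×ℝ → ℝ, Continuous h → Integrable h (μ.prod μ) := by
    intro h hc; rw [← hresSq]; exact hc.continuousOn.integrableOn_compact cSq
  have intSqI : ∀ h : (ℝ×ℝ)×ℝ → ℝ, Continuous h → Integrable h ((μ.prod μ).prod ν) := by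
    intro h hc; rw [← hresSqI]
    exact hc.continuousOn.integrableOn_compact (cSq.prod isCompact_Icc)
  have intISq : ∀ h : ℝ×(ℝ×ℝ) → ℝ, Continuous h → Integrable h (ν.prod (μ.prod μ)) := by
    intro h hc; rw [← hresISq]
    exact hc.continuousOn.integrableOn_compact (isCompact_Icc.prod cSq)
  have mem3 : ∀ h : ℝ×ℝ×ℝ → ℝ, Continuous h → MemLp h 2 (μ.prod (μ.prod ν)) := by
    intro h hc
    obtain ⟨C, hC⟩ := cBox.exists_bound_of_continuousOn hc.continuousOn
    refine MemLp.of_bound hc.aestronglyMeasurable C ?_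
    rw [← hresBox]; exact ae_restrict_of_forall_mem mBox hC
  have mem2 : ∀ h : ℝ×ℝ → ℝ, Continuous h → MemLp h 2 (μ.prod μ) := by
    intro h hc
    obtain ⟨C, hC⟩ := cSq.exists_bound_of_continuousOn hc.continuousOn
    refine MemLp.of_bound hc.aestronglyMeasurable C ?_
    rw [← hresSq]; exact ae_restrict_of_forall_mem mSq hC
  have hfc : Continuous f := hf.continuous
  have hfd : Differentiable ℝ f := hf.differentiable (by simp)
  have hcderiv : Continuous (fderiv ℝ f) := hf.continuous_fderiv (by simp)
  have hdxc : Continuous (pdx f) := hcderiv.clm_apply continuous_const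
  have hdyc : Continuous (pdy f) := hcderiv.clm_apply continuous_const
  have hdzc : Continuous (pdz f) := hcderiv.clm_apply continuous_const
  have hdX : ∀ y z x : ℝ, HasDerivAt (fun x => f (x,y,z)) (pdx f (x,y,z)) x := by
    intro y z x
    have h1 : HasDerivAt (fun x : ℝ => ((x, y, z) : ℝ×ℝ×ℝ)) (1, 0, 0) x :=
      (hasDerivAt_id x).prodMk (hasDerivAt_const x ((y, z) : ℝ×ℝ))
    exact ((hfd (x,y,z)).hasFDerivAt).comp_hasDerivAt x h1
  have hdY : ∀ x z y : ℝ, HasDerivAt (fun y => f (x,y,z)) (pdy f (x,y,z)) y := by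
    intro x z y
    have h1 : HasDerivAt (fun y : ℝ => ((x, y, z) : ℝ×ℝ×ℝ)) (0, 1, 0) y :=
      (hasDerivAt_const y x).prodMk ((hasDerivAt_id y).prodMk (hasDerivAt_const y z))
    exact ((hfd (x,y,z)).hasFDerivAt).comp_hasDerivAt y h1
  have hdZ : ∀ x y z : ℝ, HasDerivAt (fun z => f (x,y,z)) (pdz f (x,y,z)) z := by
    intro x y z
    have h1 : HasDerivAt (fun z : ℝ => ((x, y, z) : ℝ×ℝ×ℝ)) (0, 0, 1) z :=
      (hasDerivAt_const z x).prodMk ((hasDerivAt_const z y).prodMk (hasDerivAt_id z))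
    exact ((hfd (x,y,z)).hasFDerivAt).comp_hasDerivAt z h1
  -- Reassociation of the triple product measure
  have hassoc : ∀ h : ℝ×ℝ×ℝ → ℝ,
      (∫ w, h (w.1.1, w.1.2, w.2) ∂((μ.prod μ).prod ν)) = ∫ p, h p ∂(μ.prod (μ.prod ν)) := by
    intro h
    have hmp := MeasureTheory.measurePreserving_prodAssoc μ μ ν
    have := hmp.integral_comp MeasurableEquiv.prodAssoc.measurableEmbedding h
    simpa [MeasurableEquiv.prodAssoc, Equiv.prodAssoc] using this
  have hIterZ : ∀ h : ℝ×ℝ×ℝ → ℝ, Continuous h →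
      (∫ p, h p ∂(μ.prod (μ.prod ν)))
        = ∫ z, (∫ q, h (q.1, q.2, z) ∂(μ.prod μ)) ∂ν := by
    intro h hc
    rw [← hassoc h]
    have hswap : (∫ w, h (w.1.1, w.1.2, w.2) ∂((μ.prod μ).prod ν))
        = ∫ w, h (w.2.1, w.2.2, w.1) ∂(ν.prod (μ.prod μ)) :=
      (MeasureTheory.integral_prod_swap
        (μ := μ.prod μ) (ν := ν) (fun w : (ℝ×ℝ)×ℝ => h (w.1.1, w.1.2, w.2))).symm
    rw [hswap]
    exact MeasureTheory.integral_prod _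
      (intISq _ (hc.comp (((continuous_fst.comp continuous_snd).prodMk
        (((continuous_snd.comp continuous_snd)).prodMk continuous_fst)))))
  -- Basic quantities
  have hnnf2 : (0:ℝ) ≤ ∫ p in Box L, f p ^ 2 := setIntegral_nonneg mBox fun p _ => sq_nonneg _
  have hnng2 : (0:ℝ) ≤ ∫ p in Box L, pdx f p ^ 2 + pdy f p ^ 2 :=
    setIntegral_nonneg mBox fun p _ => by positivity
  have hnnz2 : (0:ℝ) ≤ ∫ p in Box L, pdz f p ^ 2 :=
    setIntegral_nonneg mBox fun p _ => sq_nonneg _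
  have hA0 : 0 ≤ nL2 L f := Real.rpow_nonneg hnnf2 _
  have hB0 : 0 ≤ nGH L f := Real.rpow_nonneg hnng2 _
  have hC0 : 0 ≤ nL2 L (pdz f) := Real.rpow_nonneg hnnz2 _
  have sqhalf : ∀ X : ℝ, 0 ≤ X → (X ^ ((1:ℝ)/2)) ^ 2 = X := by
    intro X hX
    rw [← Real.rpow_natCast (X ^ ((1:ℝ)/2)) 2, ← Real.rpow_mul hX]
    norm_num
  have hA2 : nL2 L f ^ 2 = ∫ p, f p ^ 2 ∂(μ.prod (μ.prod ν)) := by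
    rw [← hresBox]; exact sqhalf _ hnnf2
  have hB2 : nGH L f ^ 2 = ∫ p, (pdx f p ^ 2 + pdy f p ^ 2) ∂(μ.prod (μ.prod ν)) := by
    rw [← hresBox]; exact sqhalf _ hnng2
  have hC2 : nL2 L (pdz f) ^ 2 = ∫ p, pdz f p ^ 2 ∂(μ.prod (μ.prod ν)) := by
    rw [← hresBox]; exact sqhalf _ hnnz2
  -- slice quantities
  set M2 : ℝ → ℝ := fun z => ∫ q, f (q.1, q.2, z) ^ 2 ∂(μ.prod μ) with hM2
  set X2 : ℝ → ℝ := fun z =>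
    ∫ q, (pdx f (q.1, q.2, z) ^ 2 + pdy f (q.1, q.2, z) ^ 2) ∂(μ.prod μ) with hX2
  set Jx : ℝ → ℝ := fun z => ∫ q, |f (q.1, q.2, z) * pdx f (q.1, q.2, z)| ∂(μ.prod μ) with hJx
  set Jy : ℝ → ℝ := fun z => ∫ q, |f (q.1, q.2, z) * pdy f (q.1, q.2, z)| ∂(μ.prod μ) with hJy
  set m : ℝ → ℝ := fun z => Real.sqrt (M2 z) with hm
  set g : ℝ → ℝ := fun z => Real.sqrt (X2 z) with hg
  set Isl : ℝ → ℝ := fun z => ∫ q, f (q.1, q.2, z) ^ 4 ∂(μ.prod μ) with hIsl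
  have hsec : ∀ z : ℝ, Continuous fun q : ℝ×ℝ => ((q.1, q.2, z) : ℝ×ℝ×ℝ) := fun z =>
    continuous_fst.prodMk (continuous_snd.prodMk continuous_const)
  have hM2nn : ∀ z, 0 ≤ M2 z := fun z => integral_nonneg fun q => sq_nonneg _
  have hX2nn : ∀ z, 0 ≤ X2 z := fun z => integral_nonneg fun q => by positivity
  have hJxnn : ∀ z, 0 ≤ Jx z := fun z => integral_nonneg fun q => abs_nonneg _
  have hJynn : ∀ z, 0 ≤ Jy z := fun z => integral_nonneg fun q => abs_nonneg _
  have hmnn : ∀ z, 0 ≤ m z := fun z => Real.sqrt_nonneg _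
  have hgnn : ∀ z, 0 ≤ g z := fun z => Real.sqrt_nonneg _
  have hm2 : ∀ z, m z ^ 2 = M2 z := fun z => Real.sq_sqrt (hM2nn z)
  have hg2 : ∀ z, g z ^ 2 = X2 z := fun z => Real.sq_sqrt (hX2nn z)
  -- Cauchy-Schwarz on slices
  have hJxle : ∀ z, Jx z ≤ m z * g z := by
    intro z
    have h1 := myCS (μ := μ.prod μ)
      (mem2 _ (hfc.comp (hsec z))) (mem2 _ (hdxc.comp (hsec z)))
    have h2 : Real.sqrt (∫ q, pdx f (q.1, q.2, z) ^ 2 ∂(μ.prod μ)) ≤ g z := by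
      apply Real.sqrt_le_sqrt
      apply integral_mono (int2 _ (by exact ((hdxc.comp (hsec z)).pow 2)))
        (int2 _ (by exact (((hdxc.comp (hsec z)).pow 2).add ((hdyc.comp (hsec z)).pow 2))))
      exact fun q => le_add_of_nonneg_right (sq_nonneg _)
    exact h1.trans (mul_le_mul_of_nonneg_left h2 (Real.sqrt_nonneg _))
  have hJyle : ∀ z, Jy z ≤ m z * g z := by
    intro z
    have h1 := myCS (μ := μ.prod μ)
      (mem2 _ (hfc.comp (hsec z))) (mem2 _ (hdyc.comp (hsec z)))
    have h2 : Real.sqrt (∫ q, pdy f (q.1, q.2, z) ^ 2 ∂(μ.prod μ)) ≤ g z := by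
      apply Real.sqrt_le_sqrt
      apply integral_mono (int2 _ (by exact ((hdyc.comp (hsec z)).pow 2)))
        (int2 _ (by exact (((hdxc.comp (hsec z)).pow 2).add ((hdyc.comp (hsec z)).pow 2))))
      exact fun q => le_add_of_nonneg_left (sq_nonneg _)
    exact h1.trans (mul_le_mul_of_nonneg_left h2 (Real.sqrt_nonneg _))
  -- 1D pointwise bounds
  have hxpt : ∀ (y z : ℝ), ∀ x ∈ Icc (0:ℝ) L, f (x,y,z) ^ 2 ≤
      (1/L) * (∫ s, f (s,y,z) ^ 2 ∂μ) + 2 * (∫ s, |f (s,y,z) * pdx f (s,y,z)| ∂μ) := by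
    intro y z x hx
    rw [hμ]
    exact myOneD hL (fun x => hdX y z x)
      (hfc.comp (continuous_id.prodMk (continuous_const.prodMk continuous_const)))
      (hdxc.comp (continuous_id.prodMk (continuous_const.prodMk continuous_const))) hx
  have hypt : ∀ (x z : ℝ), ∀ y ∈ Icc (0:ℝ) L, f (x,y,z) ^ 2 ≤
      (1/L) * (∫ t, f (x,t,z) ^ 2 ∂μ) + 2 * (∫ t, |f (x,t,z) * pdy f (x,t,z)| ∂μ) := by
    intro x z y hy
    rw [hμ]
    exact myOneD hL (fun y => hdY x z y)
      (hfc.comp (continuous_const.prodMk (continuous_id.prodMk continuous_const)))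
      (hdyc.comp (continuous_const.prodMk (continuous_id.prodMk continuous_const))) hy
  have hzpt : ∀ (x y : ℝ), ∀ z ∈ Icc (0:ℝ) 1, f (x,y,z) ^ 2 ≤
      (1/1) * (∫ t, f (x,y,t) ^ 2 ∂ν) + 2 * (∫ t, |f (x,y,t) * pdz f (x,y,t)| ∂ν) := by
    intro x y z hz
    rw [hν]
    exact myOneD one_pos (fun z => hdZ x y z)
      (hfc.comp (continuous_const.prodMk (continuous_const.prodMk continuous_id)))
      (hdzc.comp (continuous_const.prodMk (continuous_const.prodMk continuous_id))) hz
  -- 2D Ladyzhenskaya on each slice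
  have hsliceFG : ∀ z : ℝ, Isl z ≤ ((1/L) * M2 z + 2 * Jy z) * ((1/L) * M2 z + 2 * Jx z) := by
    intro z
    have hc2 : Continuous fun q : ℝ×ℝ => f (q.1, q.2, z) ^ 2 := (hfc.comp (hsec z)).pow 2
    have hc4 : Continuous fun q : ℝ×ℝ => f (q.1, q.2, z) ^ 4 := (hfc.comp (hsec z)).pow 4
    have hcx : Continuous fun q : ℝ×ℝ => |f (q.1, q.2, z) * pdx f (q.1, q.2, z)| :=
      ((hfc.comp (hsec z)).mul (hdxc.comp (hsec z))).abs
    have hcy : Continuous fun q : ℝ×ℝ => |f (q.1, q.2, z) * pdy f (q.1, q.2, z)| :=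
      ((hfc.comp (hsec z)).mul (hdyc.comp (hsec z))).abs
    set F : ℝ → ℝ := fun y => (1/L) * (∫ s, f (s,y,z) ^ 2 ∂μ)
      + 2 * (∫ s, |f (s,y,z) * pdx f (s,y,z)| ∂μ) with hF
    set G : ℝ → ℝ := fun x => (1/L) * (∫ t, f (x,t,z) ^ 2 ∂μ)
      + 2 * (∫ t, |f (x,t,z) * pdy f (x,t,z)| ∂μ) with hG
    have hI1 : Integrable (fun y => ∫ s, f (s,y,z) ^ 2 ∂μ) μ :=
      (int2 _ hc2).integral_prod_right
    have hI2 : Integrable (fun y => ∫ s, |f (s,y,z) * pdx f (s,y,z)| ∂μ) μ :=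
      (int2 _ hcx).integral_prod_right
    have hI3 : Integrable (fun x => ∫ t, f (x,t,z) ^ 2 ∂μ) μ :=
      (int2 _ hc2).integral_prod_left
    have hI4 : Integrable (fun x => ∫ t, |f (x,t,z) * pdy f (x,t,z)| ∂μ) μ :=
      (int2 _ hcy).integral_prod_left
    have hFi : Integrable F μ := (hI1.const_mul _).add (hI2.const_mul _)
    have hGi : Integrable G μ := (hI3.const_mul _).add (hI4.const_mul _)
    have hpt : ∀ q ∈ Sq L, f (q.1, q.2, z) ^ 4 ≤ G q.1 * F q.2 := by
      intro q hq
      have h1 : f (q.1, q.2, z) ^ 2 ≤ F q.2 := hxpt q.2 z q.1 hq.1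
      have h2 : f (q.1, q.2, z) ^ 2 ≤ G q.1 := hypt q.1 z q.2 hq.2
      have h4 : f (q.1, q.2, z) ^ 4 = f (q.1, q.2, z) ^ 2 * f (q.1, q.2, z) ^ 2 := by ring
      rw [h4]
      exact mul_le_mul h2 h1 (sq_nonneg _) ((sq_nonneg _).trans h2)
    have step1 : Isl z ≤ ∫ q, G q.1 * F q.2 ∂(μ.prod μ) := by
      apply integral_mono_ae (int2 _ hc4) (hGi.mul_prod hFi)
      rw [← hresSq]
      exact ae_restrict_of_forall_mem mSq hpt
    have step2 : (∫ q, G q.1 * F q.2 ∂(μ.prod μ)) = (∫ x, G x ∂μ) * (∫ y, F y ∂μ) :=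
      integral_prod_mul G F
    have eM : (∫ y, (∫ s, f (s,y,z) ^ 2 ∂μ) ∂μ) = M2 z :=
      ((MeasureTheory.integral_integral_swap (f := fun x y => f (x,y,z) ^ 2)
        (int2 _ hc2)).symm).trans (MeasureTheory.integral_integral (int2 _ hc2))
    have eJ : (∫ y, (∫ s, |f (s,y,z) * pdx f (s,y,z)| ∂μ) ∂μ) = Jx z :=
      ((MeasureTheory.integral_integral_swap
        (f := fun x y => |f (x,y,z) * pdx f (x,y,z)|)
        (int2 _ hcx)).symm).trans (MeasureTheory.integral_integral (int2 _ hcx))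
    have eM2 : (∫ x, (∫ t, f (x,t,z) ^ 2 ∂μ) ∂μ) = M2 z :=
      MeasureTheory.integral_integral (int2 _ hc2)
    have eJ2 : (∫ x, (∫ t, |f (x,t,z) * pdy f (x,t,z)| ∂μ) ∂μ) = Jy z :=
      MeasureTheory.integral_integral (int2 _ hcy)
    have hFeq : (∫ y, F y ∂μ) = (1/L) * M2 z + 2 * Jx z := by
      rw [hF]
      rw [integral_add (hI1.const_mul _) (hI2.const_mul _), integral_const_mul,
        integral_const_mul, eM, eJ]
    have hGeq : (∫ x, G x ∂μ) = (1/L) * M2 z + 2 * Jy z := by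
      rw [hG]
      rw [integral_add (hI3.const_mul _) (hI4.const_mul _), integral_const_mul,
        integral_const_mul, eM2, eJ2]
    calc Isl z ≤ ∫ q, G q.1 * F q.2 ∂(μ.prod μ) := step1
    _ = (∫ x, G x ∂μ) * (∫ y, F y ∂μ) := step2
    _ = ((1/L) * M2 z + 2 * Jy z) * ((1/L) * M2 z + 2 * Jx z) := by rw [hFeq, hGeq]
  set K0 : ℝ := max (1/L) 2 with hK0
  have hK00 : 0 ≤ K0 := le_trans (by norm_num) (le_max_right (1/L) 2)
  have hK0L : 1/L ≤ K0 := le_max_left _ _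
  have hK02 : (2:ℝ) ≤ K0 := le_max_right _ _
  have hslice : ∀ z : ℝ, Isl z ≤ K0^2 * (m z ^ 2 * (m z + g z) ^ 2) := by
    intro z
    have hM2m : M2 z = m z * m z := by rw [← hm2 z]; ring
    have h1 : (1/L) * M2 z + 2 * Jy z ≤ K0 * (m z * (m z + g z)) := by
      nlinarith [hJyle z, hmnn z, hgnn z, mul_nonneg (hmnn z) (hmnn z),
        mul_nonneg (hmnn z) (hgnn z), hK0L, hK02]
    have h2 : (1/L) * M2 z + 2 * Jx z ≤ K0 * (m z * (m z + g z)) := by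
      nlinarith [hJxle z, hmnn z, hgnn z, mul_nonneg (hmnn z) (hmnn z),
        mul_nonneg (hmnn z) (hgnn z), hK0L, hK02]
    have hnn1 : 0 ≤ (1/L) * M2 z + 2 * Jx z := by
      have := hM2nn z; have := hJxnn z; positivity
    have hnn2 : 0 ≤ K0 * (m z * (m z + g z)) := by
      have := hmnn z; have := hgnn z; positivity
    calc Isl z ≤ ((1/L) * M2 z + 2 * Jy z) * ((1/L) * M2 z + 2 * Jx z) := hsliceFG z
    _ ≤ (K0 * (m z * (m z + g z))) * (K0 * (m z * (m z + g z))) := mul_le_mul h1 h2 hnn1 hnn2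
    _ = K0^2 * (m z ^ 2 * (m z + g z) ^ 2) := by ring
  -- bound on horizontal L² norm of slices via the z-direction
  have hcw : Continuous fun w : (ℝ×ℝ)×ℝ => ((w.1.1, w.1.2, w.2) : ℝ×ℝ×ℝ) :=
    (continuous_fst.comp continuous_fst).prodMk
      ((continuous_snd.comp continuous_fst).prodMk continuous_snd)
  have hm2b : ∀ z ∈ Icc (0:ℝ) 1,
      M2 z ≤ nL2 L f ^ 2 + 2 * (nL2 L f * nL2 L (pdz f)) := by
    intro z hz
    have hH1c : Continuous fun w : (ℝ×ℝ)×ℝ => f (w.1.1, w.1.2, w.2) ^ 2 := (hfc.comp hcw).pow 2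
    have hH2c : Continuous fun w : (ℝ×ℝ)×ℝ =>
        |f (w.1.1, w.1.2, w.2) * pdz f (w.1.1, w.1.2, w.2)| :=
      ((hfc.comp hcw).mul (hdzc.comp hcw)).abs
    have hH1 := intSqI _ hH1c
    have hH2 := intSqI _ hH2c
    have hI1 : Integrable (fun q : ℝ×ℝ => ∫ t, f (q.1, q.2, t) ^ 2 ∂ν) (μ.prod μ) :=
      hH1.integral_prod_left
    have hI2 : Integrable (fun q : ℝ×ℝ =>
        ∫ t, |f (q.1, q.2, t) * pdz f (q.1, q.2, t)| ∂ν) (μ.prod μ) :=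
      hH2.integral_prod_left
    have hMle : M2 z ≤ ∫ q, ((1/1) * (∫ t, f (q.1, q.2, t) ^ 2 ∂ν)
        + 2 * (∫ t, |f (q.1, q.2, t) * pdz f (q.1, q.2, t)| ∂ν)) ∂(μ.prod μ) := by
      apply integral_mono (int2 _ ((hfc.comp (hsec z)).pow 2))
        ((hI1.const_mul _).add (hI2.const_mul _))
      intro q
      exact hzpt q.1 q.2 z hz
    have e1 : (∫ q, (∫ t, f (q.1, q.2, t) ^ 2 ∂ν) ∂(μ.prod μ))
        = ∫ p, f p ^ 2 ∂(μ.prod (μ.prod ν)) := by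
      rw [MeasureTheory.integral_integral (f := fun (q : ℝ×ℝ) (t : ℝ) => f (q.1, q.2, t) ^ 2) hH1]
      exact hassoc (fun p => f p ^ 2)
    have e2 : (∫ q, (∫ t, |f (q.1, q.2, t) * pdz f (q.1, q.2, t)| ∂ν) ∂(μ.prod μ))
        = ∫ p, |f p * pdz f p| ∂(μ.prod (μ.prod ν)) := by
      rw [MeasureTheory.integral_integral
        (f := fun (q : ℝ×ℝ) (t : ℝ) => |f (q.1, q.2, t) * pdz f (q.1, q.2, t)|) hH2]
      exact hassoc (fun p => |f p * pdz f p|)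
    have hcs3 : (∫ p, |f p * pdz f p| ∂(μ.prod (μ.prod ν)))
        ≤ nL2 L f * nL2 L (pdz f) := by
      have h := myCS (μ := μ.prod (μ.prod ν)) (mem3 f hfc) (mem3 _ hdzc)
      rw [← hA2, ← hC2, Real.sqrt_sq hA0, Real.sqrt_sq hC0] at h
      exact h
    have hsplit : (∫ q, ((1/1) * (∫ t, f (q.1, q.2, t) ^ 2 ∂ν)
        + 2 * (∫ t, |f (q.1, q.2, t) * pdz f (q.1, q.2, t)| ∂ν)) ∂(μ.prod μ))
        = (1/1) * (∫ p, f p ^ 2 ∂(μ.prod (μ.prod ν)))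
          + 2 * (∫ p, |f p * pdz f p| ∂(μ.prod (μ.prod ν))) := by
      rw [integral_add (hI1.const_mul _) (hI2.const_mul _), integral_const_mul,
        integral_const_mul, e1, e2]
    rw [hsplit] at hMle
    rw [← hA2] at hMle
    nlinarith [hMle, hcs3]
  -- integrability in z
  have hcw2 : Continuous fun w : ℝ×(ℝ×ℝ) => ((w.2.1, w.2.2, w.1) : ℝ×ℝ×ℝ) :=
    (continuous_fst.comp continuous_snd).prodMk
      ((continuous_snd.comp continuous_snd).prodMk continuous_fst)
  have hIslInt : Integrable Isl ν :=
    (intISq (fun w => f (w.2.1, w.2.2, w.1) ^ 4) ((hfc.comp hcw2).pow 4)).integral_prod_left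
  have hM2Int : Integrable M2 ν :=
    (intISq (fun w => f (w.2.1, w.2.2, w.1) ^ 2) ((hfc.comp hcw2).pow 2)).integral_prod_left
  have hX2Int : Integrable X2 ν :=
    (intISq (fun w => pdx f (w.2.1, w.2.2, w.1) ^ 2 + pdy f (w.2.1, w.2.2, w.1) ^ 2)
      (((hdxc.comp hcw2).pow 2).add ((hdyc.comp hcw2).pow 2))).integral_prod_left
  have hmMeas : AEStronglyMeasurable m ν :=
    Real.continuous_sqrt.comp_aestronglyMeasurable hM2Int.1
  have hgMeas : AEStronglyMeasurable g ν :=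
    Real.continuous_sqrt.comp_aestronglyMeasurable hX2Int.1
  -- uniform bounds on [0,1]
  obtain ⟨Cf, hCf⟩ := cBox.exists_bound_of_continuousOn
    (((hdxc.pow 2).add (hdyc.pow 2)).continuousOn)
  set CX : ℝ := Cf * ((μ.prod μ) Set.univ).toReal with hCX
  have hX2b : ∀ z ∈ Icc (0:ℝ) 1, X2 z ≤ CX := by
    intro z hz
    have hb : ‖∫ q, (pdx f (q.1,q.2,z) ^ 2 + pdy f (q.1,q.2,z) ^ 2) ∂(μ.prod μ)‖
        ≤ Cf * ((μ.prod μ) Set.univ).toReal := by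
      apply norm_integral_le_of_norm_le_const
      rw [← hresSq]
      exact ae_restrict_of_forall_mem mSq fun q hq => hCf (q.1,q.2,z) ⟨hq.1, hq.2, hz⟩
    exact (le_abs_self _).trans (by simpa [Real.norm_eq_abs] using hb)
  set CM : ℝ := nL2 L f ^ 2 + 2 * (nL2 L f * nL2 L (pdz f)) with hCM
  have hCMnn : 0 ≤ CM := by positivity
  have hmb : ∀ z ∈ Icc (0:ℝ) 1, m z ≤ Real.sqrt CM := fun z hz =>
    Real.sqrt_le_sqrt (hm2b z hz)
  have hgb : ∀ z ∈ Icc (0:ℝ) 1, g z ≤ Real.sqrt CX := fun z hz =>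
    Real.sqrt_le_sqrt (hX2b z hz)
  have intb : ∀ u : ℝ → ℝ, AEStronglyMeasurable u ν →
      (∃ C, ∀ z ∈ Icc (0:ℝ) 1, ‖u z‖ ≤ C) → Integrable u ν := by
    rintro u hu ⟨C, hC⟩
    refine memLp_one_iff_integrable.mp (MemLp.of_bound hu C ?_)
    rw [hν]
    exact ae_restrict_of_forall_mem measurableSet_Icc hC
  have hIntSq : Integrable (fun z => (m z + g z) ^ 2) ν := by
    apply intb _ (by
      have h : AEStronglyMeasurable (fun z => (m z + g z) * (m z + g z)) ν :=
        (hmMeas.add hgMeas).mul (hmMeas.add hgMeas)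
      simpa only [pow_two] using h)
    refine ⟨(Real.sqrt CM + Real.sqrt CX) ^ 2, fun z hz => ?_⟩
    rw [Real.norm_eq_abs, abs_of_nonneg (sq_nonneg _)]
    exact pow_le_pow_left₀ (add_nonneg (hmnn z) (hgnn z))
      (add_le_add (hmb z hz) (hgb z hz)) 2
  have hbig : Integrable (fun z => K0 ^ 2 * (CM * (m z + g z) ^ 2)) ν :=
    (hIntSq.const_mul CM).const_mul (K0 ^ 2)
  have h5 : (∫ z, Isl z ∂ν) ≤ ∫ z, K0 ^ 2 * (CM * (m z + g z) ^ 2) ∂ν := by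
    apply integral_mono_ae hIslInt hbig
    rw [hν]
    apply ae_restrict_of_forall_mem measurableSet_Icc
    intro z hz
    refine (hslice z).trans ?_
    exact mul_le_mul_of_nonneg_left (mul_le_mul_of_nonneg_right
      ((hm2 z).trans_le (hm2b z hz)) (sq_nonneg _)) (sq_nonneg K0)
  have h6 : (∫ z, K0 ^ 2 * (CM * (m z + g z) ^ 2) ∂ν)
      = K0 ^ 2 * (CM * ∫ z, (m z + g z) ^ 2 ∂ν) := by
    rw [integral_const_mul, integral_const_mul]
  have eM2' : (∫ z, M2 z ∂ν) = nL2 L f ^ 2 :=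
    ((hIterZ (fun p => f p ^ 2) (hfc.pow 2)).symm).trans hA2.symm
  have eX2' : (∫ z, X2 z ∂ν) = nGH L f ^ 2 :=
    ((hIterZ (fun p => pdx f p ^ 2 + pdy f p ^ 2)
      ((hdxc.pow 2).add (hdyc.pow 2))).symm).trans hB2.symm
  have h7 : (∫ z, (m z + g z) ^ 2 ∂ν) ≤ 2 * nL2 L f ^ 2 + 2 * nGH L f ^ 2 := by
    have hpt : ∀ z, (m z + g z) ^ 2 ≤ 2 * M2 z + 2 * X2 z := by
      intro z
      nlinarith [hm2 z, hg2 z, sq_nonneg (m z - g z)]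
    calc (∫ z, (m z + g z) ^ 2 ∂ν) ≤ ∫ z, (2 * M2 z + 2 * X2 z) ∂ν :=
      integral_mono hIntSq ((hM2Int.const_mul 2).add (hX2Int.const_mul 2)) hpt
    _ = 2 * (∫ z, M2 z ∂ν) + 2 * (∫ z, X2 z ∂ν) := by
      rw [integral_add (hM2Int.const_mul 2) (hX2Int.const_mul 2), integral_const_mul,
        integral_const_mul]
    _ = 2 * nL2 L f ^ 2 + 2 * nGH L f ^ 2 := by rw [eM2', eX2']
  have habs4 : ∀ r : ℝ, |r| ^ 4 = r ^ 4 := fun r => by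
    rw [pow_abs, abs_of_nonneg (by positivity)]
  have hfin1 : (∫ p in Box L, |f p| ^ 4) = ∫ p, f p ^ 4 ∂(μ.prod (μ.prod ν)) := by
    simp only [habs4]
    rw [← hresBox]
  calc (∫ p in Box L, |f p| ^ 4) = ∫ p, f p ^ 4 ∂(μ.prod (μ.prod ν)) := hfin1
  _ = ∫ z, Isl z ∂ν := hIterZ (fun p => f p ^ 4) (hfc.pow 4)
  _ ≤ ∫ z, K0 ^ 2 * (CM * (m z + g z) ^ 2) ∂ν := h5
  _ = K0 ^ 2 * (CM * ∫ z, (m z + g z) ^ 2 ∂ν) := h6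
  _ ≤ K0 ^ 2 * (CM * (2 * nL2 L f ^ 2 + 2 * nGH L f ^ 2)) :=
      mul_le_mul_of_nonneg_left (mul_le_mul_of_nonneg_left h7 hCMnn) (sq_nonneg K0)
  _ ≤ 4 * K0 ^ 2 * nL2 L f * (nL2 L f + nGH L f) ^ 2 * (nL2 L f + nL2 L (pdz f)) := by
      have e1 : CM ≤ 2 * nL2 L f * (nL2 L f + nL2 L (pdz f)) := by
        rw [hCM]; nlinarith [hA0, hC0]
      have e2 : 2 * nL2 L f ^ 2 + 2 * nGH L f ^ 2 ≤ 2 * (nL2 L f + nGH L f) ^ 2 := by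
        nlinarith [mul_nonneg hA0 hB0]
      have hS0 : (0:ℝ) ≤ 2 * nL2 L f ^ 2 + 2 * nGH L f ^ 2 := by positivity
      have hb0 : (0:ℝ) ≤ 2 * nL2 L f * (nL2 L f + nL2 L (pdz f)) := by positivity
      calc K0 ^ 2 * (CM * (2 * nL2 L f ^ 2 + 2 * nGH L f ^ 2))
          ≤ K0 ^ 2 * ((2 * nL2 L f * (nL2 L f + nL2 L (pdz f)))
            * (2 * (nL2 L f + nGH L f) ^ 2)) :=
        mul_le_mul_of_nonneg_left (mul_le_mul e1 e2 hS0 hb0) (sq_nonneg K0)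
      _ = 4 * K0 ^ 2 * nL2 L f * (nL2 L f + nGH L f) ^ 2 * (nL2 L f + nL2 L (pdz f)) := by
        ring

/-- ‖f‖_{L⁴} ≤ C ‖f‖₂^{1/4} (‖f‖₂ + ‖∇_h f‖₂)^{1/2} (‖f‖₂ + ‖f_z‖₂)^{1/4}. -/
theorem stmt11 (L : ℝ) (hL : 0 < L) :
    ∃ C : ℝ, 0 < C ∧ ∀ f : ℝ × ℝ × ℝ → ℝ, ContDiff ℝ (⊤ : ℕ∞) f → Per L f →
      (∫ p in Box L, |f p| ^ 4) ^ ((1:ℝ)/4)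
        ≤ C * (nL2 L f) ^ ((1:ℝ)/4) * (nL2 L f + nGH L f) ^ ((1:ℝ)/2)
            * (nL2 L f + nL2 L (pdz f)) ^ ((1:ℝ)/4) := by
  have hK0 : (0:ℝ) < max (1/L) 2 := lt_of_lt_of_le two_pos (le_max_right _ _)
  refine ⟨(4 * (max (1/L) 2)^2) ^ ((1:ℝ)/4), Real.rpow_pos_of_pos (by positivity) _, ?_⟩
  intro f hf _
  have mBox : MeasurableSet (Box L) :=
    measurableSet_Icc.prod (measurableSet_Icc.prod measurableSet_Icc)
  have hnnf2 : (0:ℝ) ≤ ∫ p in Box L, f p ^ 2 := setIntegral_nonneg mBox fun p _ => sq_nonneg _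
  have hnng2 : (0:ℝ) ≤ ∫ p in Box L, pdx f p ^ 2 + pdy f p ^ 2 :=
    setIntegral_nonneg mBox fun p _ => by positivity
  have hnnz2 : (0:ℝ) ≤ ∫ p in Box L, pdz f p ^ 2 :=
    setIntegral_nonneg mBox fun p _ => sq_nonneg _
  have hA0 : 0 ≤ nL2 L f := Real.rpow_nonneg hnnf2 _
  have hB0 : 0 ≤ nGH L f := Real.rpow_nonneg hnng2 _
  have hC0 : 0 ≤ nL2 L (pdz f) := Real.rpow_nonneg hnnz2 _
  have hI40 : (0:ℝ) ≤ ∫ p in Box L, |f p| ^ 4 :=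
    setIntegral_nonneg mBox fun p _ => by positivity
  have hkey := key L hL f hf
  have h1 : (∫ p in Box L, |f p| ^ 4) ^ ((1:ℝ)/4)
      ≤ ((4 * (max (1/L) 2)^2) * nL2 L f * (nL2 L f + nGH L f)^2
          * (nL2 L f + nL2 L (pdz f))) ^ ((1:ℝ)/4) :=
    Real.rpow_le_rpow hI40 hkey (by norm_num)
  refine h1.trans_eq ?_
  have hKnn : (0:ℝ) ≤ 4 * (max (1/L) 2)^2 := by positivity
  have hABnn : (0:ℝ) ≤ nL2 L f + nGH L f := add_nonneg hA0 hB0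
  have hACnn : (0:ℝ) ≤ nL2 L f + nL2 L (pdz f) := add_nonneg hA0 hC0
  rw [Real.mul_rpow (by positivity) hACnn, Real.mul_rpow (by positivity) (sq_nonneg _),
    Real.mul_rpow hKnn hA0]
  have hsq : ((nL2 L f + nGH L f) ^ 2) ^ ((1:ℝ)/4) = (nL2 L f + nGH L f) ^ ((1:ℝ)/2) := by
    rw [← Real.rpow_natCast (nL2 L f + nGH L f) 2, ← Real.rpow_mul hABnn]
    norm_num
  rw [hsq]
end
end
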